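/- arXiv:2411.18614 — 7 statements merged into one kernel-verified Lean document; each statement's English description precedes it below -/
import Mathlib

section
/- For any finite rooted tree t and any node u of t, if |θ_u t|/|t| < (1 + Φ(t))^{-1}, where Φ(t) = φ_t(root)/min_v φ_t(v) is the competitive ratio and θ_u t is the subtree rooted at u, then φ_t(u) > φ_t(root). -/
open Finset
open scoped Classical

/-- A plane tree in the Ulam–Harris formalism: a finite set of words
containing the root, closed under parents, with children `u*0, …, u*(k-1)`. -/
def IsPlaneTree (t : Finset (List ℕ)) : Prop :=
  [] ∈ t ∧ (∀ u ∈ t, u ≠ [] → u.dropLast ∈ t) ∧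
  (∀ u j k, u ++ [j] ∈ t → k ≤ j → u ++ [k] ∈ t)

/-- `subSize t v` is the number of nodes of the subtree of `t` rooted at `v`. -/
noncomputable def subSize (t : Finset (List ℕ)) (v : List ℕ) : ℕ :=
  (t.filter (fun w => v <+: w)).card

/-- The centrality measure `φ_t(u)`. -/
noncomputable def phi (t : Finset (List ℕ)) (u : List ℕ) : ℝ :=
  (∏ v ∈ t.filter (fun v => ¬ v <+: u), (subSize t v : ℝ)) *
  (∏ v ∈ t.filter (fun v => v ≠ [] ∧ v <+: u), ((t.card : ℝ) - subSize t v))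

/-- The competitive ratio `Φ(t) = φ_t(∅) / min_{u ∈ t} φ_t(u)`. -/
noncomputable def PhiRatio (t : Finset (List ℕ)) : ℝ :=
  phi t [] / sInf (phi t '' ↑t)

/-
Writing `n = |t|`, `s = |θ_u t|` and `m = min φ_t`, suppose `φ_t(u) ≤ φ_t(∅) = Φ(t)·m`. For `u ≠ ∅`
with parent `p`, the identity `φ_t(u)·s = (n − s)·φ_t(p)` and `φ_t(p) ≥ m` give
`(n − s)·m ≤ Φ(t)·m·s`, i.e. `n ≤ (1 + Φ(t))·s`, contradicting `s/n < (1 + Φ(t))⁻¹`;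
for `u = ∅` the same inequality holds trivially since `s = n`.
-/

section

variable {t : Finset (List ℕ)}

lemma subSize_pos {v : List ℕ} (hv : v ∈ t) : 0 < subSize t v :=
  Finset.card_pos.mpr ⟨v, Finset.mem_filter.mpr ⟨hv, List.prefix_refl v⟩⟩

lemma subSize_lt_card (hroot : [] ∈ t) {v : List ℕ} (hv : v ≠ []) : subSize t v < t.card := by
  refine Finset.card_lt_card ⟨Finset.filter_subset _ _, fun hsub => hv ?_⟩
  simpa using (Finset.mem_filter.mp (hsub hroot)).2

lemma subSize_nil : subSize t [] = t.card := by
  simp [subSize]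

lemma phi_pos (hroot : [] ∈ t) (u : List ℕ) : 0 < phi t u := by
  refine mul_pos (Finset.prod_pos fun v hv => ?_) (Finset.prod_pos fun v hv => ?_)
  · exact_mod_cast subSize_pos (Finset.mem_filter.mp hv).1
  · exact sub_pos.mpr (by exact_mod_cast subSize_lt_card hroot (Finset.mem_filter.mp hv).2.1)

lemma not_append_singleton_prefix (p : List ℕ) (a : ℕ) : ¬ p ++ [a] <+: p := fun h => by
  simpa using h.length_le

lemma filter_not_prefix_eq_insert {p : List ℕ} {a : ℕ} (hu : p ++ [a] ∈ t) :
    t.filter (fun v => ¬ v <+: p) = insert (p ++ [a]) (t.filter (fun v => ¬ v <+: p ++ [a])) := by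
  ext v
  simp only [Finset.mem_filter, Finset.mem_insert, List.prefix_concat_iff]
  constructor
  · tauto
  · rintro (rfl | ⟨hv, hvu⟩)
    · exact ⟨hu, not_append_singleton_prefix p a⟩
    · tauto

lemma filter_prefix_eq_insert {p : List ℕ} {a : ℕ} (hu : p ++ [a] ∈ t) :
    t.filter (fun v => v ≠ [] ∧ v <+: p ++ [a])
      = insert (p ++ [a]) (t.filter (fun v => v ≠ [] ∧ v <+: p)) := by
  ext v
  simp only [Finset.mem_filter, Finset.mem_insert, List.prefix_concat_iff]
  constructor
  · tauto
  · rintro (rfl | ⟨hv, hne, hvp⟩)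
    · exact ⟨hu, by simp, Or.inl rfl⟩
    · exact ⟨hv, hne, Or.inr hvp⟩

lemma phi_append_singleton_mul_subSize {p : List ℕ} {a : ℕ} (hu : p ++ [a] ∈ t) :
    phi t (p ++ [a]) * subSize t (p ++ [a])
      = ((t.card : ℝ) - subSize t (p ++ [a])) * phi t p := by
  have hA : p ++ [a] ∉ t.filter (fun v => ¬ v <+: p ++ [a]) := by simp
  have hB : p ++ [a] ∉ t.filter (fun v => v ≠ [] ∧ v <+: p) := by
    simp [not_append_singleton_prefix]
  simp only [phi, filter_not_prefix_eq_insert hu, filter_prefix_eq_insert hu,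
    Finset.prod_insert hA, Finset.prod_insert hB]
  ring

lemma sInf_phi_le {v : List ℕ} (hv : v ∈ t) : sInf (phi t '' ↑t) ≤ phi t v :=
  csInf_le (t.finite_toSet.image _).bddBelow ⟨v, hv, rfl⟩

lemma sInf_phi_pos (hroot : [] ∈ t) : 0 < sInf (phi t '' ↑t) := by
  have hne : (phi t '' ↑t).Nonempty := ⟨_, [], hroot, rfl⟩
  obtain ⟨w, -, hw⟩ := hne.csInf_mem (t.finite_toSet.image (phi t))
  exact hw ▸ phi_pos hroot w

lemma PhiRatio_nonneg (hroot : [] ∈ t) : 0 ≤ PhiRatio t :=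
  (div_pos (phi_pos hroot []) (sInf_phi_pos hroot)).le

lemma phi_nil_eq_PhiRatio_mul (hroot : [] ∈ t) : phi t [] = PhiRatio t * sInf (phi t '' ↑t) :=
  (div_mul_cancel₀ _ (sInf_phi_pos hroot).ne').symm

lemma card_le_one_add_PhiRatio_mul_subSize (ht : IsPlaneTree t) {u : List ℕ} (hu : u ∈ t)
    (hφ : phi t u ≤ phi t []) : (t.card : ℝ) ≤ (1 + PhiRatio t) * subSize t u := by
  obtain ⟨hroot, hparent, -⟩ := ht
  rcases List.eq_nil_or_concat u with rfl | ⟨p, a, rfl⟩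
  · rw [subSize_nil]
    exact le_mul_of_one_le_left (Nat.cast_nonneg _) (by linarith [PhiRatio_nonneg hroot])
  rw [List.concat_eq_append] at hu hφ ⊢
  have hp : p ∈ t := by simpa using hparent _ hu (by simp)
  set m := sInf (phi t '' ↑t)
  have hm : 0 < m := sInf_phi_pos hroot
  have hs : (subSize t (p ++ [a]) : ℝ) ≤ t.card := by
    exact_mod_cast (subSize_lt_card hroot (by simp)).le
  have key : ((t.card : ℝ) - subSize t (p ++ [a])) * m ≤ PhiRatio t * subSize t (p ++ [a]) * m :=
    calc ((t.card : ℝ) - subSize t (p ++ [a])) * m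
        ≤ ((t.card : ℝ) - subSize t (p ++ [a])) * phi t p :=
          mul_le_mul_of_nonneg_left (sInf_phi_le hp) (sub_nonneg.mpr hs)
      _ = phi t (p ++ [a]) * subSize t (p ++ [a]) := (phi_append_singleton_mul_subSize hu).symm
      _ ≤ PhiRatio t * m * subSize t (p ++ [a]) := by
          rw [← phi_nil_eq_PhiRatio_mul hroot]
          exact mul_le_mul_of_nonneg_right hφ (Nat.cast_nonneg _)
      _ = PhiRatio t * subSize t (p ++ [a]) * m := by ring
  linarith [le_of_mul_le_mul_right key hm]

end

theorem stmt0 (t : Finset (List ℕ)) (ht : IsPlaneTree t) (u : List ℕ) (hu : u ∈ t)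
    (h : (subSize t u : ℝ) / t.card < (1 + PhiRatio t)⁻¹) :
    phi t u > phi t [] := by
  by_contra! hφ
  have hn : (0 : ℝ) < t.card := by exact_mod_cast Finset.card_pos.mpr ⟨[], ht.1⟩
  have hΦ : 0 < 1 + PhiRatio t := by linarith [PhiRatio_nonneg ht.1]
  rw [div_lt_iff₀ hn, ← div_eq_inv_mul, lt_div_iff₀ hΦ, mul_comm] at h
  linarith [card_le_one_add_PhiRatio_mul_subSize ht hu hφ]
end

section
/- For a finite rooted tree t with node u having parent w, the identity φ_t(u)·|θ_u t| = (|t| − |θ_u t|)·φ_t(w) holds, where φ_t is the centrality measure and θ_u t is the subtree rooted at u. -/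
open Finset
open scoped Classical

/-! Passing from the parent `u.dropLast` to `u` moves exactly one node, `u` itself, from the
non-ancestors of the evaluation point to its ancestors; this exchanges the factor `|θ_u t|` of
the first product of `φ` for the factor `|t| - |θ_u t|` of the second. -/

namespace List

variable {α : Type*}

theorem prefix_iff_eq_or_prefix_dropLast {u v : List α} (hu : u ≠ []) :
    v <+: u ↔ v = u ∨ v <+: u.dropLast := by
  simpa only [dropLast_append_getLast hu] using
    prefix_concat_iff (l₁ := v) (l₂ := u.dropLast) (a := u.getLast hu)

theorem not_prefix_dropLast {u : List α} (hu : u ≠ []) : ¬ u <+: u.dropLast := fun h => by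
  have := h.length_le
  have := length_pos_iff.mpr hu
  simp only [length_dropLast] at *
  omega

end List

section Ancestors

variable {α : Type*} [DecidableEq α] {t : Finset (List α)} {u : List α}

theorem filter_not_prefix_dropLast_eq_insert (hut : u ∈ t) (hu : u ≠ []) :
    t.filter (fun v => ¬ v <+: u.dropLast) = insert u (t.filter (fun v => ¬ v <+: u)) := by
  ext v
  rw [mem_insert, mem_filter, mem_filter, List.prefix_iff_eq_or_prefix_dropLast hu]
  by_cases hvu : v = u
  · subst hvu
    simp [hut, List.not_prefix_dropLast hu]
  · simp [hvu]

theorem filter_ne_nil_prefix_eq_insert (hut : u ∈ t) (hu : u ≠ []) :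
    t.filter (fun v => v ≠ [] ∧ v <+: u) =
      insert u (t.filter (fun v => v ≠ [] ∧ v <+: u.dropLast)) := by
  ext v
  rw [mem_insert, mem_filter, mem_filter, List.prefix_iff_eq_or_prefix_dropLast hu]
  by_cases hvu : v = u
  · subst hvu
    simp [hut, hu]
  · simp [hvu]

end Ancestors

theorem stmt1_general (t : Finset (List ℕ)) (u : List ℕ) (hu : u ∈ t)
    (hne : u ≠ []) :
    phi t u * (subSize t u : ℝ) = ((t.card : ℝ) - subSize t u) * phi t u.dropLast := by
  have hu_not_dropLast : u ∉ t.filter (fun v => v ≠ [] ∧ v <+: u.dropLast) := by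
    simp [List.not_prefix_dropLast hne]
  have hu_not_self : u ∉ t.filter (fun v => ¬ v <+: u) := by simp
  rw [phi, phi, filter_ne_nil_prefix_eq_insert hu hne, prod_insert hu_not_dropLast,
    filter_not_prefix_dropLast_eq_insert hu hne, prod_insert hu_not_self]
  ring

theorem stmt1 (t : Finset (List ℕ)) (ht : IsPlaneTree t) (u : List ℕ) (hu : u ∈ t)
    (hne : u ≠ []) :
    phi t u * (subSize t u : ℝ) = ((t.card : ℝ) - subSize t u) * phi t u.dropLast :=
  stmt1_general t u hu hne
end

section
/- For a finite rooted tree t and a node u ≠ root, φ_t(parent(u)) ≥ φ_t(u) if and only if |θ_u t| ≥ |t|/2. -/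
open Finset
open scoped Classical

theorem stmt4 (t : Finset (List ℕ)) (ht : IsPlaneTree t) (u : List ℕ) (hu : u ∈ t)
    (hne : u ≠ []) :
    phi t u.dropLast ≥ phi t u ↔ t.card ≤ 2 * subSize t u := by
  obtain ⟨hroot, hpar, hchild⟩ := ht
  set p := u.dropLast with hp
  have hcat : p ++ [u.getLast hne] = u := List.dropLast_append_getLast hne
  have hlen : p.length < u.length := by
    rw [← hcat]; simp
  -- key prefix fact
  have key : ∀ v : List ℕ, v <+: u ↔ v <+: p ∨ v = u := by
    intro v
    rw [← hcat, List.prefix_concat_iff]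
    tauto
  have hup : ¬ u <+: p := fun h => absurd (List.IsPrefix.length_le h) (by omega)
  -- positivity of subSize on t
  have hpos : ∀ v ∈ t, 0 < subSize t v := by
    intro v hv
    apply Finset.card_pos.mpr
    exact ⟨v, Finset.mem_filter.mpr ⟨hv, List.prefix_refl v⟩⟩
  -- subSize < card for nonroot
  have hlt : ∀ v ∈ t, v ≠ [] → subSize t v < t.card := by
    intro v hv hvne
    apply Finset.card_lt_card
    refine ⟨Finset.filter_subset _ _, fun hsub => ?_⟩
    have := hsub hroot
    rw [Finset.mem_filter] at this
    exact hvne (List.prefix_nil.mp this.2)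
  -- set decompositions
  have h1 : t.filter (fun v => ¬ v <+: p) = insert u (t.filter (fun v => ¬ v <+: u)) := by
    ext v
    simp only [Finset.mem_insert, Finset.mem_filter, key]
    constructor
    · rintro ⟨hv, h⟩
      by_cases hvu : v = u
      · exact Or.inl hvu
      · exact Or.inr ⟨hv, by tauto⟩
    · rintro (rfl | ⟨hv, h⟩)
      · exact ⟨hu, hup⟩
      · exact ⟨hv, fun hvp => h (Or.inl hvp)⟩
  have h2 : t.filter (fun v => v ≠ [] ∧ v <+: u)
      = insert u (t.filter (fun v => v ≠ [] ∧ v <+: p)) := by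
    ext v
    simp only [Finset.mem_insert, Finset.mem_filter, key]
    constructor
    · rintro ⟨hv, hvne, (hvp | rfl)⟩
      · exact Or.inr ⟨hv, hvne, hvp⟩
      · exact Or.inl rfl
    · rintro (rfl | ⟨hv, hvne, hvp⟩)
      · exact ⟨hu, hne, Or.inr rfl⟩
      · exact ⟨hv, hvne, Or.inl hvp⟩
  have hnm1 : u ∉ t.filter (fun v => ¬ v <+: u) := by
    simp [List.prefix_refl]
  have hnm2 : u ∉ t.filter (fun v => v ≠ [] ∧ v <+: p) := by
    simp only [Finset.mem_filter, not_and]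
    exact fun _ _ => hup
  set A : ℝ := ∏ v ∈ t.filter (fun v => ¬ v <+: u), (subSize t v : ℝ) with hA
  set B : ℝ := ∏ v ∈ t.filter (fun v => v ≠ [] ∧ v <+: p), ((t.card : ℝ) - subSize t v)
    with hB
  have hApos : 0 < A := by
    apply Finset.prod_pos
    intro v hv
    exact_mod_cast hpos v (Finset.mem_filter.mp hv).1
  have hBpos : 0 < B := by
    apply Finset.prod_pos
    intro v hv
    obtain ⟨hv, hvne, _⟩ := Finset.mem_filter.mp hv
    have := hlt v hv hvne
    have : (subSize t v : ℝ) < t.card := by exact_mod_cast this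
    linarith
  have ePhiP : phi t p = (A * B) * (subSize t u : ℝ) := by
    rw [phi, h1, Finset.prod_insert hnm1, ← hA, ← hB]; ring
  have ePhiU : phi t u = (A * B) * ((t.card : ℝ) - subSize t u) := by
    rw [phi, h2, Finset.prod_insert hnm2, ← hA, ← hB]; ring
  rw [ge_iff_le, ePhiP, ePhiU, mul_le_mul_iff_right₀ (by positivity)]
  rw [sub_le_iff_le_add]
  constructor
  · intro h
    have : (t.card : ℝ) ≤ 2 * subSize t u := by push_cast at h ⊢; linarith
    exact_mod_cast this
  · intro h
    have : (t.card : ℝ) ≤ 2 * subSize t u := by exact_mod_cast h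
    linarith
end

section
/- Let α ∈ (1,2] and define γ: U → [0,1] on the set U of finite words over positive integers by γ(∅) = 1 and γ(u*j) = α^{1−j} γ(u) for all words u and j ≥ 1. Then there is a universal constant c > 0, not depending on α, such that for all x ≥ 1, the number N_x(γ) of words u ∈ U satisfying x·∏_{∅ ≺ v ⪯ u} (γ(v)/2) ≥ 1 is at most exp(c + c·√(log_α x)). -/
open Finset Real



lemma my_geom_le {r : ℝ} (h0 : 0 ≤ r) (h1 : r < 1) (n : ℕ) :
    ∑ i ∈ range n, r ^ i ≤ (1 - r)⁻¹ := by
  have h1' : r ≠ 1 := ne_of_lt h1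
  rw [geom_sum_eq h1']
  have hpos : 0 < 1 - r := by linarith
  rw [div_le_iff_of_neg (by linarith : r - 1 < 0)]
  have : 0 ≤ r ^ n := pow_nonneg h0 n
  have h2 : (1-r)⁻¹ * (r-1) = -1 := by field_simp; ring
  rw [h2]; linarith

lemma my_invsq_aux (M : ℕ) (hM : 1 ≤ M) :
    ∑ n ∈ range M, (1:ℝ) / ((n+1)^2) ≤ 2 - 1/(M:ℝ) := by
  induction M with
  | zero => omega
  | succ m ih =>
    rcases Nat.eq_zero_or_pos m with h | h
    · subst h; norm_num
    · have hprev := ih h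
      rw [sum_range_succ]
      have hm : (0:ℝ) < m := by exact_mod_cast h
      have key : (1:ℝ) / ((m+1)^2) ≤ 1/(m:ℝ) - 1/((m:ℝ)+1) := by
        rw [div_sub_div _ _ (ne_of_gt hm) (by positivity), div_le_div_iff₀ (by positivity) (by positivity)]
        push_cast; nlinarith
      push_cast at hprev ⊢
      linarith

lemma my_invsq (M : ℕ) : ∑ n ∈ range M, (1:ℝ) / ((n+1)^2) ≤ 2 := by
  rcases Nat.eq_zero_or_pos M with h | h
  · subst h; norm_num
  · have hm : (0:ℝ) < M := by exact_mod_cast h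
    have h1 : (0:ℝ) < 1/(M:ℝ) := by positivity
    linarith [my_invsq_aux M h]

lemma my_sum_sum (d : ℕ → ℕ) (h : ℕ) :
    ∑ j ∈ range h, ∑ i ∈ range (j+1), d i = ∑ i ∈ range h, (h - i) * d i := by
  induction h with
  | zero => simp
  | succ m ih =>
    rw [sum_range_succ, ih]
    have h1 : ∑ i ∈ range (m+1), (m+1-i) * d i
        = ∑ i ∈ range (m+1), ((m-i) * d i + d i) := by
      apply sum_congr rfl
      intro i hi
      have hi' : i ≤ m := by simpa [Nat.lt_succ_iff] using hi
      have : m + 1 - i = (m - i) + 1 := by omega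
      rw [this]; ring
    rw [h1, sum_add_distrib, sum_range_succ (fun i => (m-i) * d i)]
    simp

lemma my_one_sub_pow {x : ℝ} (h0 : 0 ≤ x) (h1 : x ≤ 1) (m : ℕ) :
    (m+1 : ℝ) * x ^ m * (1 - x) ≤ 1 - x ^ (m+1) := by
  have hg : (1 - x) * ∑ i ∈ range (m+1), x ^ i = 1 - x ^ (m+1) := by
    have := geom_sum_mul x (m+1)
    nlinarith [this]
  rw [← hg]
  have hterm : (m+1 : ℝ) * x ^ m ≤ ∑ i ∈ range (m+1), x ^ i := by
    have hs : ∀ i ∈ range (m+1), x ^ m ≤ x ^ i := by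
      intro i hi
      exact pow_le_pow_of_le_one h0 h1 (by simpa [Nat.lt_succ_iff] using hi)
    calc (m+1 : ℝ) * x ^ m = ∑ _i ∈ range (m+1), x ^ m := by simp [mul_comm]
    _ ≤ _ := sum_le_sum hs
  nlinarith [pow_nonneg h0 m]

def myPSet (M : ℕ) : Finset (Fin M → Fin (M+1)) :=
  Finset.univ.filter (fun w => ∑ i : Fin M, (i.1+1) * (w i).1 ≤ M)

-- core expansion: card * x^M ≤ ∏_i ∑_j x^((i+1)*j)

lemma step1 (M : ℕ) {x : ℝ} (h0 : 0 ≤ x) (h1 : x ≤ 1) :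
    ((myPSet M).card : ℝ) * x ^ M ≤
      ∏ i : Fin M, ∑ j : Fin (M+1), x ^ ((i.1+1) * j.1) := by
  have key : ∀ w ∈ myPSet M, x ^ M ≤ ∏ i : Fin M, x ^ ((i.1+1) * (w i).1) := by
    intro w hw
    rw [Finset.prod_pow_eq_pow_sum]
    apply pow_le_pow_of_le_one h0 h1
    simpa [myPSet] using hw
  calc ((myPSet M).card : ℝ) * x ^ M = (myPSet M).card • x ^ M := by simp
  _ ≤ ∑ w ∈ myPSet M, ∏ i : Fin M, x ^ ((i.1+1) * (w i).1) :=
      Finset.card_nsmul_le_sum _ _ _ key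
  _ ≤ ∑ w : Fin M → Fin (M+1), ∏ i : Fin M, x ^ ((i.1+1) * (w i).1) := by
      apply Finset.sum_le_sum_of_subset_of_nonneg (Finset.filter_subset _ _)
      intro w _ _
      exact Finset.prod_nonneg fun i _ => pow_nonneg h0 _
  _ = ∏ i : Fin M, ∑ j : Fin (M+1), x ^ ((i.1+1) * j.1) := by
      rw [Finset.prod_univ_sum]
      rw [← Fintype.piFinset_univ]

lemma pcount_bound (M : ℕ) :
    ((myPSet M).card : ℝ) ≤ Real.exp (27 + 4 * Real.sqrt M) := by
  have hexp27 : (64 : ℝ) ≤ Real.exp 27 := by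
    have h1 : (13.5 : ℝ) + 1 ≤ Real.exp 13.5 := Real.add_one_le_exp _
    have : Real.exp 27 = Real.exp 13.5 * Real.exp 13.5 := by
      rw [← Real.exp_add]; norm_num
    nlinarith
  rcases lt_or_ge M 4 with hM | hM
  · -- small case
    have hcard : (myPSet M).card ≤ (M+1)^M := by
      calc (myPSet M).card ≤ Finset.univ.card := Finset.card_filter_le _ _
      _ = (M+1)^M := by simp [Finset.card_univ]
    have h2 : ((M:ℝ)+1)^M ≤ 64 := by
      interval_cases M <;> norm_num
    have h3 : ((myPSet M).card : ℝ) ≤ ((M:ℝ)+1)^M := by exact_mod_cast hcard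
    have h4 : Real.exp 27 ≤ Real.exp (27 + 4 * Real.sqrt M) := by
      apply Real.exp_le_exp.2
      have : 0 ≤ Real.sqrt M := Real.sqrt_nonneg _
      linarith
    linarith
  · -- main case
    set s : ℝ := Real.sqrt M with hs
    have hs2 : 2 ≤ s := by
      rw [hs, show (2:ℝ) = Real.sqrt 4 by rw [show (4:ℝ) = 2^2 by norm_num, Real.sqrt_sq]; norm_num]
      exact Real.sqrt_le_sqrt (by exact_mod_cast hM)
    have hspos : 0 < s := by linarith
    set t : ℝ := s⁻¹ with ht
    have htpos : 0 < t := by positivity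
    have hthalf : t ≤ 1/2 := by
      rw [ht]; rw [inv_le_comm₀ hspos (by norm_num)]; linarith
    set x : ℝ := 1 - t with hx
    have hx0 : (0:ℝ) < x := by rw [hx]; linarith
    have hx1 : x < 1 := by rw [hx]; linarith
    have hxM : x ^ M > 0 := pow_pos hx0 M
    have htM : t * M = s := by
      rw [ht]; field_simp; rw [hs, Real.sq_sqrt (by positivity)]
    -- Step A: per-factor geometric bound
    have stepA : ∀ i : Fin M, (∑ j : Fin (M+1), x ^ ((i.1+1) * j.1)) ≤ (1 - x ^ (i.1+1))⁻¹ := by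
      intro i
      have hxk1 : x ^ (i.1+1) < 1 := pow_lt_one₀ hx0.le hx1 (Nat.succ_ne_zero _)
      calc ∑ j : Fin (M+1), x ^ ((i.1+1) * j.1)
          = ∑ j : Fin (M+1), (x ^ (i.1+1)) ^ j.1 :=
            Finset.sum_congr rfl fun j _ => by rw [← pow_mul]
      _ = ∑ j ∈ range (M+1), (x ^ (i.1+1)) ^ j :=
            Fin.sum_univ_eq_sum_range (fun j => (x ^ (i.1+1)) ^ j) (M+1)
      _ ≤ (1 - x ^ (i.1+1))⁻¹ := my_geom_le (by positivity) hxk1 _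
    -- Step B : (1-y)⁻¹ ≤ exp (b)
    have stepB : ∀ i : Fin M, (1 - x ^ (i.1+1))⁻¹ ≤
        Real.exp ((∑ n ∈ range M, (x^(i.1+1)) ^ (n+1) / (n+1)) + (x^(i.1+1))^(M+1) / (1 - x^(i.1+1))) := by
      intro i
      set y := x ^ (i.1+1) with hy
      have hy0 : 0 < y := by positivity
      have hy1 : y < 1 := pow_lt_one₀ hx0.le hx1 (Nat.succ_ne_zero _)
      have habs : |y| < 1 := by rw [abs_of_pos hy0]; exact hy1
      have := Real.abs_log_sub_add_sum_range_le habs M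
      rw [abs_of_pos hy0] at this
      have hlog : -Real.log (1 - y) ≤ (∑ n ∈ range M, y ^ (n+1) / (n+1)) + y^(M+1) / (1 - y) := by
        have h2 := abs_le.1 this
        linarith [h2.1]
      calc (1 - y)⁻¹ = Real.exp (-Real.log (1 - y)) := by
            rw [Real.exp_neg, Real.exp_log (by linarith)]
      _ ≤ _ := Real.exp_le_exp.2 hlog
    -- combine products
    have prod_bound : (∏ i : Fin M, ∑ j : Fin (M+1), x ^ ((i.1+1) * j.1)) ≤
        Real.exp (∑ i : Fin M, ((∑ n ∈ range M, (x^(i.1+1)) ^ (n+1) / (n+1)) + (x^(i.1+1))^(M+1) / (1 - x^(i.1+1)))) := by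
      rw [Real.exp_sum]
      apply Finset.prod_le_prod
      · intro i _
        exact Finset.sum_nonneg fun j _ => pow_nonneg hx0.le _
      · intro i _
        exact (stepA i).trans (stepB i)
    -- bound the exponent sum
    have partA : ∑ i ∈ range M, ∑ n ∈ range M, (x^(i+1)) ^ (n+1) / (n+1) ≤ 2 * s := by
      rw [Finset.sum_comm]
      have inner : ∀ n ∈ range M, (∑ i ∈ range M, (x^(i+1)) ^ (n+1) / (n+1)) ≤
          (1:ℝ)/((n+1)^2) * s := by
        intro n _
        have hyn : x ^ (n+1) < 1 := pow_lt_one₀ hx0.le hx1 (Nat.succ_ne_zero _)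
        have h1y : (0:ℝ) < 1 - x^(n+1) := by linarith
        have hsum : ∑ i ∈ range M, (x^(n+1)) ^ (i+1) ≤ x^(n+1) * (1 - x^(n+1))⁻¹ := by
          have he : ∑ i ∈ range M, (x^(n+1)) ^ (i+1) = x^(n+1) * ∑ i ∈ range M, (x^(n+1)) ^ i := by
            rw [Finset.mul_sum]
            exact Finset.sum_congr rfl fun i _ => by ring
          rw [he]
          exact mul_le_mul_of_nonneg_left (my_geom_le (by positivity) hyn _) (by positivity)
        have hlow : (n+1 : ℝ) * x ^ n * t ≤ 1 - x^(n+1) := by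
          have h := my_one_sub_pow hx0.le hx1.le n
          calc (n+1 : ℝ) * x ^ n * t = (n+1 : ℝ) * x ^ n * (1 - x) := by rw [hx]; ring_nf
          _ ≤ 1 - x^(n+1) := h
        have hfin : x^(n+1) * (1 - x^(n+1))⁻¹ ≤ 1/(n+1) * s := by
          have hd : (0:ℝ) < (n+1 : ℝ) * x ^ n * t := by positivity
          have hi : (1 - x^(n+1))⁻¹ ≤ ((n+1 : ℝ) * x ^ n * t)⁻¹ := by
            apply inv_anti₀ hd hlow
          calc x^(n+1) * (1 - x^(n+1))⁻¹ ≤ x^(n+1) * ((n+1 : ℝ) * x ^ n * t)⁻¹ :=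
                mul_le_mul_of_nonneg_left hi (by positivity)
          _ = x * (1/(n+1)) * t⁻¹ := by
                rw [pow_succ]
                field_simp
          _ = x * (1/(n+1)) * s := by rw [ht, inv_inv]
          _ ≤ 1 * (1/(n+1)) * s := by
                have h1n : (0:ℝ) ≤ 1/((n:ℝ)+1) := by positivity
                exact mul_le_mul_of_nonneg_right
                  (mul_le_mul_of_nonneg_right hx1.le h1n) hspos.le
          _ = 1/(n+1) * s := by ring
        calc ∑ i ∈ range M, (x^(i+1)) ^ (n+1) / (n+1)
            = (∑ i ∈ range M, (x^(n+1)) ^ (i+1)) / (n+1) := by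
              rw [Finset.sum_div]
              exact Finset.sum_congr rfl fun i _ => by
                rw [← pow_mul, ← pow_mul, Nat.mul_comm]
        _ ≤ (x^(n+1) * (1 - x^(n+1))⁻¹) / (n+1) := by gcongr
        _ ≤ (1/(n+1) * s) / (n+1) := by gcongr
        _ = (1:ℝ)/((n+1)^2) * s := by
              rw [one_div_mul_eq_div, div_div, ← sq, ← one_div_mul_eq_div]
      calc ∑ n ∈ range M, ∑ i ∈ range M, (x^(i+1)) ^ (n+1) / (n+1)
          ≤ ∑ n ∈ range M, (1:ℝ)/((n+1)^2) * s := Finset.sum_le_sum inner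
      _ = (∑ n ∈ range M, (1:ℝ)/((n+1)^2)) * s := by rw [Finset.sum_mul]
      _ ≤ 2 * s := by
            have := my_invsq M
            nlinarith
    have partB : ∑ i ∈ range M, (x^(i+1))^(M+1) / (1 - x^(i+1)) ≤ 27 := by
      have hxlt : x ≤ 1 := hx1.le
      have termb : ∀ i ∈ range M, (x^(i+1))^(M+1) / (1 - x^(i+1)) ≤ x^M * s := by
        intro i _
        have hxi : x^(i+1) ≤ x := by
          calc x^(i+1) ≤ x^1 := pow_le_pow_of_le_one hx0.le hxlt (by omega)
          _ = x := pow_one x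
        have h1y : t ≤ 1 - x^(i+1) := by rw [hx] at hxi ⊢; linarith
        have h1y' : (0:ℝ) < 1 - x^(i+1) := lt_of_lt_of_le htpos h1y
        have hnum : (x^(i+1))^(M+1) ≤ x^M := by
          rw [← pow_mul]
          apply pow_le_pow_of_le_one hx0.le hxlt
          calc M ≤ 1 * (M+1) := by omega
          _ ≤ (i+1) * (M+1) := by
                apply Nat.mul_le_mul_right
                omega
        calc (x^(i+1))^(M+1) / (1 - x^(i+1)) ≤ x^M / t := by
              apply div_le_div₀ (by positivity) hnum htpos h1y
        _ = x^M * s := by rw [ht]; field_simp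
      calc ∑ i ∈ range M, (x^(i+1))^(M+1) / (1 - x^(i+1)) ≤ ∑ _i ∈ range M, x^M * s :=
            Finset.sum_le_sum termb
      _ = M * (x^M * s) := by rw [Finset.sum_const, Finset.card_range]; simp
      _ ≤ 27 := by
            have hxe : x ≤ Real.exp (-t) := by
              rw [hx]
              linarith [Real.add_one_le_exp (-t)]
            have hxMe : x^M ≤ Real.exp (-s) := by
              calc x^M ≤ (Real.exp (-t))^M := pow_le_pow_left₀ hx0.le hxe M
              _ = Real.exp (-(t*M)) := by rw [← Real.exp_nat_mul]; ring_nf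
              _ = Real.exp (-s) := by rw [htM]
            have hM3 : (M:ℝ) * s = s^3 := by
              have : (M:ℝ) = s^2 := by rw [hs, Real.sq_sqrt (by positivity)]
              rw [this]; ring
            have hcube : s^3 ≤ 27 * Real.exp s := by
              have h3 : Real.exp s = (Real.exp (s/3))^3 := by
                rw [← Real.exp_nat_mul]
                push_cast
                ring_nf
              have h4 : s/3 ≤ Real.exp (s/3) := by linarith [Real.add_one_le_exp (s/3)]
              have h5 : (s/3)^3 ≤ (Real.exp (s/3))^3 := by
                apply pow_le_pow_left₀ (by positivity) h4
              rw [h3]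
              nlinarith [h5]
            calc (M:ℝ) * (x^M * s) = (M:ℝ) * s * x^M := by ring
            _ ≤ s^3 * Real.exp (-s) := by
                  rw [hM3]
                  exact mul_le_mul_of_nonneg_left hxMe (by positivity)
            _ ≤ 27 * Real.exp s * Real.exp (-s) := by
                  exact mul_le_mul_of_nonneg_right hcube (Real.exp_pos _).le
            _ = 27 := by rw [mul_assoc, ← Real.exp_add]; simp
    -- invert x^M
    have hxinv : (x⁻¹)^M ≤ Real.exp (2*s) := by
      have h1 : x⁻¹ ≤ Real.exp (2*t) := by
        have h2 : 1 + 2*t ≤ Real.exp (2*t) := by linarith [Real.add_one_le_exp (2*t)]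
        have h3 : x⁻¹ ≤ 1 + 2*t := by
          rw [inv_le_iff_one_le_mul₀ hx0, hx]
          nlinarith
        linarith
      calc (x⁻¹)^M ≤ (Real.exp (2*t))^M := pow_le_pow_left₀ (by positivity) h1 M
      _ = Real.exp (2*t*M) := by rw [← Real.exp_nat_mul]; ring_nf
      _ = Real.exp (2*s) := by rw [mul_assoc, htM]
    -- combine everything
    have main : ((myPSet M).card : ℝ) * x ^ M ≤ Real.exp (2*s + 27) := by
      have hsum_split : ∑ i : Fin M, ((∑ n ∈ range M, (x^(i.1+1)) ^ (n+1) / (n+1)) + (x^(i.1+1))^(M+1) / (1 - x^(i.1+1)))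
          = (∑ i ∈ range M, ∑ n ∈ range M, (x^(i+1)) ^ (n+1) / (n+1))
            + ∑ i ∈ range M, (x^(i+1))^(M+1) / (1 - x^(i+1)) := by
        rw [← Finset.sum_add_distrib]
        exact Fin.sum_univ_eq_sum_range (fun i => (∑ n ∈ range M, (x^(i+1)) ^ (n+1) / (n+1)) + (x^(i+1))^(M+1) / (1 - x^(i+1))) M
      calc ((myPSet M).card : ℝ) * x ^ M ≤ _ := step1 M hx0.le hx1.le
      _ ≤ Real.exp (∑ i : Fin M, ((∑ n ∈ range M, (x^(i.1+1)) ^ (n+1) / (n+1)) + (x^(i.1+1))^(M+1) / (1 - x^(i.1+1)))) := prod_bound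
      _ ≤ Real.exp (2*s + 27) := by
            rw [Real.exp_le_exp, hsum_split]
            linarith
    calc ((myPSet M).card : ℝ) = ((myPSet M).card : ℝ) * x ^ M * (x⁻¹)^M := by
          rw [mul_assoc, ← mul_pow]
          field_simp
          simp
    _ ≤ Real.exp (2*s + 27) * Real.exp (2*s) := by
          apply mul_le_mul main hxinv (by positivity) (Real.exp_pos _).le
    _ = Real.exp (27 + 4 * s) := by rw [← Real.exp_add]; ring_nf

lemma gamma_eq {α : ℝ} (hα : 0 < α) (γ : List ℕ → ℝ) (h0 : γ [] = 1)
    (hrec : ∀ u : List ℕ, ∀ j : ℕ, 1 ≤ j → γ (u ++ [j]) = α ^ (1 - (j:ℝ)) * γ u) :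
    ∀ u : List ℕ, (∀ i ∈ u, 1 ≤ i) → γ u = α ^ (((u.length:ℝ) - (u.sum:ℝ)) : ℝ) := by
  intro u
  induction u using List.reverseRecOn with
  | nil => intro _; simp [h0]
  | append_singleton v j ih =>
    intro hmem
    have hj : 1 ≤ j := hmem j (by simp)
    have hv : ∀ i ∈ v, 1 ≤ i := fun i hi => hmem i (by simp [hi])
    rw [hrec v j hj, ih hv, ← Real.rpow_add hα]
    congr 1
    simp only [List.length_append, List.sum_append, List.length_singleton, List.sum_singleton]
    push_cast; ring

lemma take_sum_eq (u : List ℕ) (j : ℕ) (hj : j ≤ u.length) :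
    (u.take j).sum = ∑ i ∈ range j, u.getD i 1 := by
  induction j with
  | zero => simp
  | succ m ih =>
    have hm : m < u.length := by omega
    rw [List.sum_take_succ _ _ hm, ih (le_of_lt hm), Finset.sum_range_succ,
      List.getD_eq_getElem _ _ hm]


set_option maxHeartbeats 1600000 in
/-- For `α ∈ (1,2]` and the geometric function `γ` with `γ(∅) = 1` and
`γ(u*j) = α^(1-j) γ(u)`, the number of words `u` over `{1,2,…}` with
`x · ∏_{∅ ≺ v ⪯ u} γ(v)/2 ≥ 1` is at most `exp(c + c √(log_α x))`, for a
universal constant `c` not depending on `α`. -/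
theorem stmt6 :
    ∃ c : ℝ, 0 < c ∧ ∀ α : ℝ, 1 < α → α ≤ 2 →
      ∀ γ : List ℕ → ℝ, γ [] = 1 →
      (∀ u : List ℕ, ∀ j : ℕ, 1 ≤ j → γ (u ++ [j]) = α ^ (1 - (j : ℝ)) * γ u) →
      ∀ x : ℝ, 1 ≤ x →
      (({u : List ℕ | (∀ i ∈ u, 1 ≤ i) ∧
          1 ≤ x * ∏ j ∈ Finset.range u.length, γ (u.take (j + 1)) / 2}).ncard : ℝ)
        ≤ Real.exp (c + c * Real.sqrt (Real.log x / Real.log α)) := by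
  refine ⟨29, by norm_num, ?_⟩
  intro α hα1 hα2 γ hγ0 hγrec x hx
  have hαpos : (0:ℝ) < α := by linarith
  have hlogα : 0 < Real.log α := Real.log_pos hα1
  have hlogx : 0 ≤ Real.log x := Real.log_nonneg hx
  set L : ℝ := Real.log x / Real.log α with hL
  have hLnn : 0 ≤ L := by positivity
  set M : ℕ := ⌊L⌋₊ with hM
  set A : Set (List ℕ) := {u : List ℕ | (∀ i ∈ u, 1 ≤ i) ∧
      1 ≤ x * ∏ j ∈ Finset.range u.length, γ (u.take (j + 1)) / 2} with hA
  -- the key per-element facts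
  have key : ∀ u ∈ A, u.length ≤ M ∧
      (∑ i ∈ range u.length, (u.length - i) * (u.getD i 1 - 1)) ≤ M := by
    intro u hu
    obtain ⟨hent, hcond⟩ := hu
    set h := u.length with hh
    set d : ℕ → ℕ := fun i => u.getD i 1 - 1 with hd
    have hget1 : ∀ i < h, 1 ≤ u.getD i 1 := by
      intro i hi
      have : u.getD i 1 ∈ u := by
        rw [List.getD_eq_getElem _ _ hi]
        exact List.getElem_mem hi
      exact hent _ this
    set S : ℕ := ∑ i ∈ range h, (h - i) * d i with hS
    -- compute the product
    have hprod : ∀ j ∈ range h, γ (u.take (j+1)) =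
        α ^ (-(((∑ i ∈ range (j+1), d i) : ℕ) : ℝ)) := by
      intro j hj
      rw [mem_range] at hj
      have hlen : (u.take (j+1)).length = j+1 := by
        rw [List.length_take]; omega
      have hmem : ∀ i ∈ u.take (j+1), 1 ≤ i := fun i hi => hent i (List.take_subset _ _ hi)
      rw [gamma_eq hαpos γ hγ0 hγrec _ hmem, hlen, take_sum_eq u (j+1) (by omega)]
      congr 1
      have : ∀ i ∈ range (j+1), u.getD i 1 = d i + 1 := by
        intro i hi
        rw [mem_range] at hi
        have := hget1 i (by omega)
        simp only [hd]; omega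
      rw [Finset.sum_congr rfl this]
      push_cast [Finset.sum_add_distrib]
      simp
    have hSsum : ∑ j ∈ range h, ∑ i ∈ range (j+1), d i = S := my_sum_sum d h
    have hprodeq : ∏ j ∈ range h, γ (u.take (j+1)) / 2
        = α ^ (-(S:ℝ)) / 2 ^ h := by
      rw [Finset.prod_div_distrib, Finset.prod_congr rfl hprod,
        ← Real.rpow_sum_of_pos hαpos]
      congr 1
      · congr 1
        rw [← hSsum]
        push_cast
        simp
      · simp [Finset.prod_const, Finset.card_range]
    rw [hprodeq] at hcond
    have hrS : α ^ (-(S:ℝ)) = ((α ^ S : ℝ))⁻¹ := by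
      rw [Real.rpow_neg hαpos.le, Real.rpow_natCast]
    rw [hrS] at hcond
    have hpow2 : (0:ℝ) < 2 ^ h := by positivity
    have hpowα : (0:ℝ) < α ^ S := by positivity
    have hxge : (2:ℝ) ^ h * α ^ S ≤ x := by
      have heq : ((α:ℝ) ^ S)⁻¹ / 2 ^ h = ((2:ℝ) ^ h * α ^ S)⁻¹ := by
        rw [div_eq_mul_inv, ← mul_inv, mul_comm]
      rw [heq, ← div_eq_mul_inv] at hcond
      exact (one_le_div (by positivity)).1 hcond
    have hα2h : α ^ h ≤ (2:ℝ) ^ h := pow_le_pow_left₀ hαpos.le hα2 h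
    have hαhS : α ^ (h + S) ≤ x := by
      rw [pow_add]
      calc α ^ h * α ^ S ≤ 2 ^ h * α ^ S := by
            exact mul_le_mul_of_nonneg_right hα2h hpowα.le
      _ ≤ x := hxge
    have hlog : ((h + S : ℕ) : ℝ) * Real.log α ≤ Real.log x := by
      have := Real.log_le_log (by positivity) hαhS
      rwa [Real.log_pow] at this
    have hhS : ((h + S : ℕ) : ℝ) ≤ L := by
      rw [hL, le_div_iff₀ hlogα]
      exact hlog
    have hfloor : h + S ≤ M := Nat.le_floor hhS
    exact ⟨by omega, by omega⟩
  -- the injection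
  set f : List ℕ → Fin (M+1) × (Fin M → Fin (M+1)) := fun u =>
    (⟨min u.length M, by omega⟩,
     fun i => ⟨if i.1 < u.length then min (u.getD (u.length - 1 - i.1) 1 - 1) M else 0,
       by split <;> omega⟩) with hf
  set F : Finset (Fin (M+1) × (Fin M → Fin (M+1))) :=
    (Finset.univ : Finset (Fin (M+1))) ×ˢ myPSet M with hF
  have hdle : ∀ u ∈ A, ∀ j < u.length, u.getD j 1 - 1 ≤ M := by
    intro u hu j hj
    obtain ⟨hh, hs⟩ := key u hu
    have hterm : (u.length - j) * (u.getD j 1 - 1)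
        ≤ ∑ i ∈ range u.length, (u.length - i) * (u.getD i 1 - 1) :=
      Finset.single_le_sum (f := fun i => (u.length - i) * (u.getD i 1 - 1))
        (fun i _ => Nat.zero_le _) (mem_range.2 hj)
    have : 1 ≤ u.length - j := by omega
    nlinarith [hterm, hs]
  have hsum_eq : ∀ u ∈ A, ∑ i : Fin M, (i.1+1) * (((f u).2) i).1
      = ∑ i ∈ range u.length, (u.length - i) * (u.getD i 1 - 1) := by
    intro u hu
    obtain ⟨hh, _⟩ := key u hu
    set h := u.length with hh'
    set d : ℕ → ℕ := fun i => u.getD i 1 - 1 with hd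
    have step1 : ∑ i : Fin M, (i.1+1) * (((f u).2) i).1
        = ∑ i ∈ range M, (i+1) * (if i < h then min (d (h - 1 - i)) M else 0) := by
      rw [Fin.sum_univ_eq_sum_range (fun i => (i+1) * (if i < h then min (d (h - 1 - i)) M else 0)) M]
    have step2 : ∑ i ∈ range M, (i+1) * (if i < h then min (d (h - 1 - i)) M else 0)
        = ∑ i ∈ range h, (i+1) * (if i < h then min (d (h - 1 - i)) M else 0) := by
      refine (Finset.sum_subset (Finset.range_subset_range.2 hh) ?_).symm
      intro i _ hih
      rw [mem_range] at hih
      simp [if_neg (by omega : ¬ i < h)]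
    have step3 : ∑ i ∈ range h, (i+1) * (if i < h then min (d (h - 1 - i)) M else 0)
        = ∑ i ∈ range h, (i+1) * d (h - 1 - i) := by
      refine Finset.sum_congr rfl ?_
      intro i hi
      rw [mem_range] at hi
      rw [if_pos hi, min_eq_left (hdle u hu _ (by omega))]
    have step4 : ∑ i ∈ range h, (i+1) * d (h - 1 - i) = ∑ i ∈ range h, (h - i) * d i := by
      have := Finset.sum_range_reflect (fun i => (h - i) * d i) h
      rw [← this]
      refine Finset.sum_congr rfl ?_
      intro j hj
      rw [mem_range] at hj
      have : h - (h - 1 - j) = j + 1 := by omega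
      rw [this]
    rw [step1, step2, step3, step4]
  have hmaps : ∀ u ∈ A, f u ∈ (↑F : Set (Fin (M+1) × (Fin M → Fin (M+1)))) := by
    intro u hu
    obtain ⟨hh, hs⟩ := key u hu
    rw [Finset.mem_coe, hF, Finset.mem_product]
    refine ⟨Finset.mem_univ _, ?_⟩
    rw [myPSet, Finset.mem_filter]
    refine ⟨Finset.mem_univ _, ?_⟩
    rw [hsum_eq u hu]
    exact hs
  have hinj : Set.InjOn f A := by
    intro u hu v hv heq
    have hul : u.length ≤ M := (key u hu).1
    have hvl : v.length ≤ M := (key v hv).1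
    have hlen : u.length = v.length := by
      have h1 := congrArg Prod.fst heq
      simp only [hf] at h1
      have := congrArg Fin.val h1
      simp only at this
      omega
    have hgetd : ∀ n < u.length, u.getD n 1 = v.getD n 1 := by
      intro n hn
      have hiM : u.length - 1 - n < M := by omega
      have h2 := congrFun (congrArg Prod.snd heq) ⟨u.length - 1 - n, hiM⟩
      simp only [hf] at h2
      have h3 := congrArg Fin.val h2
      simp only [if_pos (show u.length - 1 - n < u.length by omega),
        if_pos (show u.length - 1 - n < v.length by omega ), ← hlen] at h3
      have hrec : u.length - 1 - (u.length - 1 - n) = n := by omega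
      rw [hrec] at h3
      have hdu := hdle u hu n hn
      have hdv := hdle v hv n (by omega)
      rw [min_eq_left hdu, min_eq_left hdv] at h3
      have h1u : 1 ≤ u.getD n 1 := by
        rw [List.getD_eq_getElem _ _ hn]
        exact hu.1 _ (List.getElem_mem hn)
      have h1v : 1 ≤ v.getD n 1 := by
        rw [List.getD_eq_getElem _ _ (by omega)]
        exact hv.1 _ (List.getElem_mem _)
      omega
    apply List.ext_getElem hlen
    intro n h1 h2
    have := hgetd n h1
    rwa [List.getD_eq_getElem _ _ h1, List.getD_eq_getElem _ _ h2] at this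
  -- cardinality chain
  have hncard : A.ncard ≤ F.card := by
    have := Set.ncard_le_ncard_of_injOn f hmaps hinj F.finite_toSet
    rwa [Set.ncard_coe_finset] at this
  have hFcard : F.card = (M+1) * (myPSet M).card := by
    rw [hF, Finset.card_product]
    simp
  have hbound1 : (A.ncard : ℝ) ≤ (M+1 : ℝ) * ((myPSet M).card : ℝ) := by
    have : (A.ncard : ℝ) ≤ (F.card : ℝ) := by exact_mod_cast hncard
    rw [hFcard] at this
    push_cast at this
    linarith
  have hMexp : ((M:ℝ)+1) ≤ Real.exp (2 + Real.sqrt M) := by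
    have he1 : (2.7182818283 : ℝ) < Real.exp 1 := Real.exp_one_gt_d9
    have hsq : Real.sqrt M * Real.sqrt M = (M:ℝ) := Real.mul_self_sqrt (Nat.cast_nonneg M)
    have hsnn : 0 ≤ Real.sqrt M := Real.sqrt_nonneg _
    have h2 : Real.exp (2 + Real.sqrt M) = Real.exp 1 * Real.exp 1 * Real.exp (Real.sqrt M) := by
      rw [← Real.exp_add, ← Real.exp_add]; norm_num
    have h3 : 1 + Real.sqrt M / 2 ≤ Real.exp (Real.sqrt M / 2) := by
      linarith [Real.add_one_le_exp (Real.sqrt M / 2)]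
    have h4 : Real.exp (Real.sqrt M) = Real.exp (Real.sqrt M / 2) * Real.exp (Real.sqrt M / 2) := by
      rw [← Real.exp_add]; norm_num
    have h5 : (1 + Real.sqrt M / 2) * (1 + Real.sqrt M / 2) ≤ Real.exp (Real.sqrt M) := by
      rw [h4]
      have := Real.exp_pos (Real.sqrt M / 2)
      nlinarith
    have h6 : (7:ℝ) ≤ Real.exp 1 * Real.exp 1 := by nlinarith
    have h7 : 1 + (M:ℝ)/4 ≤ Real.exp (Real.sqrt M) := by nlinarith
    have h8 : 7 * (1 + (M:ℝ)/4) ≤ (Real.exp 1 * Real.exp 1) * Real.exp (Real.sqrt M) :=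
      mul_le_mul h6 h7 (by positivity) (by positivity)
    rw [h2]
    have hM0 : (0:ℝ) ≤ (M:ℝ) := Nat.cast_nonneg M
    linarith
  have hcount := pcount_bound M
  have hMLsqrt : Real.sqrt M ≤ Real.sqrt L := Real.sqrt_le_sqrt (Nat.floor_le hLnn)
  have hsLnn : 0 ≤ Real.sqrt L := Real.sqrt_nonneg _
  calc (A.ncard : ℝ) ≤ (M+1 : ℝ) * ((myPSet M).card : ℝ) := hbound1
  _ ≤ Real.exp (2 + Real.sqrt M) * Real.exp (27 + 4 * Real.sqrt M) := by
      apply mul_le_mul hMexp hcount (Nat.cast_nonneg _) (Real.exp_pos _).le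
  _ = Real.exp (29 + 5 * Real.sqrt M) := by rw [← Real.exp_add]; ring_nf
  _ ≤ Real.exp (29 + 29 * Real.sqrt L) := by
      rw [Real.exp_le_exp]
      have hsMnn : 0 ≤ Real.sqrt M := Real.sqrt_nonneg _
      nlinarith
end

section
/- A preflow is a function p: U → [0,1] on the set U of finite words over ℕ₁ with p(∅) = 1 and ∑_{i≥1} p(u*i) ≤ p(u) for all u; it is d-ary if p(u*j) = 0 for all j ≥ d+1. There exists a constant c_d > 0 (depending on d) such that for any d-ary preflow p and any x ≥ 1, the number of words u with x·∏_{∅ ≺ v ⪯ u}(p(v)/2) ≥ 1 is at most exp(c_d + c_d √(log x)). -/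
open Finset

namespace Stmt8Aux

open scoped Classical

/-- rank of letter `i` among the siblings `u*1,…,u*d`, ordered by decreasing
`p`-value with ties broken by index. -/
noncomputable def Rnk (d : ℕ) (p : List ℕ → ℝ) (u : List ℕ) (i : ℕ) : ℕ :=
  ((Finset.Icc 1 d).filter (fun j => p (u ++ [i]) < p (u ++ [j]) ∨
      (p (u ++ [j]) = p (u ++ [i]) ∧ j ≤ i))).card

variable {d : ℕ} {p : List ℕ → ℝ}

lemma mem_rnk_self {u : List ℕ} {i : ℕ} (hi : i ∈ Finset.Icc 1 d) :
    i ∈ (Finset.Icc 1 d).filter (fun j => p (u ++ [i]) < p (u ++ [j]) ∨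
      (p (u ++ [j]) = p (u ++ [i]) ∧ j ≤ i)) := by
  simp [hi]

lemma Rnk_pos {u : List ℕ} {i : ℕ} (hi : i ∈ Finset.Icc 1 d) :
    1 ≤ Rnk d p u i := by
  rw [Rnk, Nat.one_le_iff_ne_zero, ← Nat.pos_iff_ne_zero, Finset.card_pos]
  exact ⟨i, mem_rnk_self hi⟩

lemma Rnk_le (u : List ℕ) (i : ℕ) : Rnk d p u i ≤ d := by
  have h := Finset.card_le_card (Finset.filter_subset (fun j => p (u ++ [i]) < p (u ++ [j]) ∨
      (p (u ++ [j]) = p (u ++ [i]) ∧ j ≤ i)) (Finset.Icc 1 d))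
  simpa [Rnk, Nat.card_Icc] using h

lemma Rnk_lt {u : List ℕ} {i i' : ℕ} (hi : i ∈ Finset.Icc 1 d) (hi' : i' ∈ Finset.Icc 1 d)
    (h : p (u ++ [i']) < p (u ++ [i]) ∨ (p (u ++ [i]) = p (u ++ [i']) ∧ i < i')) :
    Rnk d p u i < Rnk d p u i' := by
  apply Finset.card_lt_card
  rw [Finset.ssubset_iff_of_subset]
  · refine ⟨i', mem_rnk_self hi', ?_⟩
    simp only [Finset.mem_filter, hi', true_and, not_or, not_lt, not_and]
    constructor
    · rcases h with h | ⟨h1, h2⟩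
      · exact h.le
      · exact h1.ge
    · intro h1
      rcases h with h | ⟨h3, h4⟩
      · exact absurd h1 (ne_of_lt h)
      · omega
  · intro j hj
    rw [Finset.mem_filter] at hj ⊢
    refine ⟨hj.1, ?_⟩
    rcases hj.2 with hj2 | ⟨hj2, hj3⟩
    · rcases h with h | ⟨h1, h2⟩
      · exact Or.inl (lt_trans h hj2)
      · exact Or.inl (h1 ▸ hj2)
    · rcases h with h | ⟨h1, h2⟩
      · exact Or.inl (hj2 ▸ h)
      · exact Or.inr ⟨hj2.trans h1, by omega⟩

lemma Rnk_injOn {u : List ℕ} {i i' : ℕ} (hi : i ∈ Finset.Icc 1 d) (hi' : i' ∈ Finset.Icc 1 d)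
    (h : Rnk d p u i = Rnk d p u i') : i = i' := by
  by_contra hne
  rcases lt_trichotomy (p (u ++ [i])) (p (u ++ [i'])) with hc | hc | hc
  · exact absurd h (Nat.ne_of_gt (Rnk_lt hi' hi (Or.inl hc)))
  · rcases Nat.lt_or_ge i i' with hii | hii
    · exact absurd h (Nat.ne_of_lt (Rnk_lt hi hi' (Or.inr ⟨hc, hii⟩)))
    · have : i' < i := by omega
      exact absurd h (Nat.ne_of_gt (Rnk_lt hi' hi (Or.inr ⟨hc.symm, this⟩)))
  · exact absurd h (Nat.ne_of_lt (Rnk_lt hi hi' (Or.inl hc)))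

lemma sum_Icc_le {u : List ℕ} (hsum : ∑' i : ℕ, p (u ++ [i + 1]) ≤ p u)
    (hdary : ∀ j : ℕ, d + 1 ≤ j → p (u ++ [j]) = 0) :
    ∑ j ∈ Finset.Icc 1 d, p (u ++ [j]) ≤ p u := by
  have h1 : ∑' i : ℕ, p (u ++ [i + 1]) = ∑ i ∈ Finset.range d, p (u ++ [i + 1]) := by
    apply tsum_eq_sum
    intro i hi
    exact hdary (i + 1) (by simp at hi; omega)
  have h2 : ∑ j ∈ Finset.Icc 1 d, p (u ++ [j]) = ∑ i ∈ Finset.range d, p (u ++ [i + 1]) := by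
    rw [← Finset.Ico_add_one_right_eq_Icc, Finset.sum_Ico_eq_sum_range]
    simp [add_comm]
  rw [h2, ← h1]
  exact hsum

lemma rank_mul_le (hp : ∀ v, 0 ≤ p v) {u : List ℕ} {i : ℕ}
    (hsum : ∑' i : ℕ, p (u ++ [i + 1]) ≤ p u)
    (hdary : ∀ j : ℕ, d + 1 ≤ j → p (u ++ [j]) = 0)
    (hi : i ∈ Finset.Icc 1 d) :
    (Rnk d p u i : ℝ) * p (u ++ [i]) ≤ p u := by
  set A := (Finset.Icc 1 d).filter (fun j => p (u ++ [i]) < p (u ++ [j]) ∨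
      (p (u ++ [j]) = p (u ++ [i]) ∧ j ≤ i)) with hA
  have h1 : (Rnk d p u i : ℝ) * p (u ++ [i]) = ∑ _j ∈ A, p (u ++ [i]) := by
    rw [Finset.sum_const, Rnk, nsmul_eq_mul]
  rw [h1]
  calc ∑ _j ∈ A, p (u ++ [i]) ≤ ∑ j ∈ A, p (u ++ [j]) := by
        apply Finset.sum_le_sum
        intro j hj
        rw [hA, Finset.mem_filter] at hj
        rcases hj.2 with h | ⟨h, _⟩
        · exact h.le
        · exact h.ge
    _ ≤ ∑ j ∈ Finset.Icc 1 d, p (u ++ [j]) := by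
        apply Finset.sum_le_sum_of_subset_of_nonneg (Finset.filter_subset _ _)
        intro j _ _
        exact hp _
    _ ≤ p u := sum_Icc_le hsum hdary

lemma exp_le_rank (hd : 2 ≤ d) {k : ℕ} (hk1 : 1 ≤ k) (hkd : k ≤ d) :
    Real.exp ((k - 1 : ℕ) * (Real.log 2 / ((d : ℝ) - 1))) ≤ (k : ℝ) := by
  have hd1 : (1 : ℝ) ≤ (d : ℝ) - 1 := by
    have : (2 : ℝ) ≤ (d : ℝ) := by exact_mod_cast hd
    linarith
  have hc0 : 0 ≤ Real.log 2 / ((d : ℝ) - 1) := by positivity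
  rcases Nat.eq_or_lt_of_le hk1 with h | h
  · simp [← h]
  · have hk2 : 2 ≤ k := h
    have h1 : ((k - 1 : ℕ) : ℝ) ≤ (d : ℝ) - 1 := by
      have : ((k - 1 : ℕ) : ℝ) = (k : ℝ) - 1 := by
        push_cast [Nat.cast_sub hk1]; ring
      rw [this]
      have : (k : ℝ) ≤ (d : ℝ) := by exact_mod_cast hkd
      linarith
    have h2 : ((k - 1 : ℕ) : ℝ) * (Real.log 2 / ((d : ℝ) - 1)) ≤ Real.log 2 := by
      calc ((k - 1 : ℕ) : ℝ) * (Real.log 2 / ((d : ℝ) - 1))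
          ≤ ((d : ℝ) - 1) * (Real.log 2 / ((d : ℝ) - 1)) :=
            mul_le_mul_of_nonneg_right h1 hc0
        _ = Real.log 2 := by field_simp
    calc Real.exp ((k - 1 : ℕ) * (Real.log 2 / ((d : ℝ) - 1)))
        ≤ Real.exp (Real.log 2) := Real.exp_le_exp.mpr h2
      _ = 2 := Real.exp_log (by norm_num)
      _ ≤ (k : ℝ) := by exact_mod_cast hk2

lemma take_succ_eq {u : List ℕ} {j : ℕ} (h : j < u.length) :
    u.take (j + 1) = u.take j ++ [u.getD j 0] := by
  rw [List.take_succ, List.getD_eq_getElem u 0 h]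
  simp [List.getElem?_eq_getElem h]

lemma sumsum (a : ℕ → ℕ) (n : ℕ) :
    ∑ m ∈ Finset.range n, ∑ j ∈ Finset.range (m + 1), a j
      = ∑ j ∈ Finset.range n, (n - j) * a j := by
  induction n with
  | zero => simp
  | succ n ih =>
    rw [Finset.sum_range_succ, ih, Finset.sum_range_succ (fun j => (n + 1 - j) * a j),
      Finset.sum_range_succ a]
    have h : ∀ j ∈ Finset.range n, (n + 1 - j) * a j = (n - j) * a j + a j := by
      intro j hj
      have hj' : j < n := Finset.mem_range.mp hj
      have : n + 1 - j = (n - j) + 1 := by omega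
      rw [this, add_mul, one_mul]
    rw [Finset.sum_congr rfl h, Finset.sum_add_distrib]
    simp
    omega

/-- bound on `p` along a path, in terms of the ranks of the letters -/
lemma path_bound (hd : 2 ≤ d) (hp : ∀ v, 0 ≤ p v) (h1 : p [] = 1)
    (hsum : ∀ v, ∑' i : ℕ, p (v ++ [i + 1]) ≤ p v)
    (hdary : ∀ v : List ℕ, ∀ j : ℕ, d + 1 ≤ j → p (v ++ [j]) = 0)
    (u : List ℕ) (hu : ∀ j, j < u.length → u.getD j 0 ∈ Finset.Icc 1 d) :
    ∀ m, m ≤ u.length →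
      p (u.take m) ≤ Real.exp (-(Real.log 2 / ((d : ℝ) - 1)) *
        ((∑ j ∈ Finset.range m, (Rnk d p (u.take j) (u.getD j 0) - 1) : ℕ) : ℝ)) := by
  intro m
  induction m with
  | zero => intro _; simp [h1]
  | succ m ih =>
    intro hm1
    have hm : m < u.length := by omega
    have ihm := ih (by omega)
    set c0 := Real.log 2 / ((d : ℝ) - 1) with hc0
    have hc0pos : 0 < c0 := by
      rw [hc0]
      have : (2 : ℝ) ≤ (d : ℝ) := by exact_mod_cast hd
      have h2 : (0:ℝ) < Real.log 2 := Real.log_pos (by norm_num)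
      apply div_pos h2 (by linarith)
    set a := u.getD m 0 with ha
    set k := Rnk d p (u.take m) a with hk
    have hamem : a ∈ Finset.Icc 1 d := hu m hm
    have hk1 : 1 ≤ k := Rnk_pos hamem
    have hkd : k ≤ d := Rnk_le _ _
    have hr : (k : ℝ) * p (u.take m ++ [a]) ≤ p (u.take m) :=
      rank_mul_le hp (hsum _) (hdary _) hamem
    have he : Real.exp ((k - 1 : ℕ) * c0) ≤ (k : ℝ) := exp_le_rank hd hk1 hkd
    have htake : u.take (m + 1) = u.take m ++ [a] := take_succ_eq hm
    have hnn : 0 ≤ p (u.take m ++ [a]) := hp _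
    have key : p (u.take (m + 1)) * Real.exp ((k - 1 : ℕ) * c0)
        ≤ Real.exp (-c0 * ((∑ j ∈ Finset.range m, (Rnk d p (u.take j) (u.getD j 0) - 1) : ℕ) : ℝ)) := by
      calc p (u.take (m + 1)) * Real.exp ((k - 1 : ℕ) * c0)
          ≤ p (u.take (m + 1)) * (k : ℝ) := by
            apply mul_le_mul_of_nonneg_left he
            rw [htake]; exact hnn
        _ = (k : ℝ) * p (u.take m ++ [a]) := by rw [htake]; ring
        _ ≤ p (u.take m) := hr
        _ ≤ _ := ihm
    have hexp : 0 < Real.exp ((k - 1 : ℕ) * c0) := Real.exp_pos _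
    have key2 : p (u.take (m + 1)) ≤ Real.exp (-c0 *
        ((∑ j ∈ Finset.range m, (Rnk d p (u.take j) (u.getD j 0) - 1) : ℕ) : ℝ)) *
        Real.exp (-((k - 1 : ℕ) * c0)) := by
      rw [Real.exp_neg]
      rw [← le_div_iff₀ hexp] at key
      rwa [div_eq_mul_inv] at key
    calc p (u.take (m + 1)) ≤ _ := key2
      _ = Real.exp (-c0 * ((∑ j ∈ Finset.range (m + 1),
            (Rnk d p (u.take j) (u.getD j 0) - 1) : ℕ) : ℝ)) := by
          rw [← Real.exp_add, Finset.sum_range_succ]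
          simp only [← ha, ← hk]
          congr 1
          push_cast [Nat.cast_sub hk1]
          ring

end Stmt8Aux

set_option maxHeartbeats 4000000 in
open Stmt8Aux in
/-- For every `d ≥ 2` there is a constant `c_d > 0` such that for every
`d`-ary preflow `p` (i.e. `p : U → [0,1]`, `p(∅) = 1`,
`∑_{i ≥ 1} p(u*i) ≤ p(u)`, and `p(u*j) = 0` for `j ≥ d+1`) and every `x ≥ 1`,
the number of words `u` over `{1,2,…}` with `x ∏_{∅ ≺ v ⪯ u} p(v)/2 ≥ 1` is at
most `exp(c_d + c_d √(log x))`. -/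
theorem stmt8 (d : ℕ) (hd : 2 ≤ d) :
    ∃ c : ℝ, 0 < c ∧ ∀ p : List ℕ → ℝ,
      (∀ u, 0 ≤ p u ∧ p u ≤ 1) → p [] = 1 →
      (∀ u : List ℕ, ∑' i : ℕ, p (u ++ [i + 1]) ≤ p u) →
      (∀ u : List ℕ, ∀ j : ℕ, d + 1 ≤ j → p (u ++ [j]) = 0) →
      ∀ x : ℝ, 1 ≤ x →
      (({u : List ℕ | (∀ i ∈ u, 1 ≤ i) ∧
          1 ≤ x * ∏ j ∈ Finset.range u.length, p (u.take (j + 1)) / 2}).ncard : ℝ)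
        ≤ Real.exp (c + c * Real.sqrt (Real.log x)) := by
  classical
  have hd1 : (1 : ℝ) ≤ (d : ℝ) - 1 := by
    have : (2 : ℝ) ≤ (d : ℝ) := by exact_mod_cast hd
    linarith
  refine ⟨2 * ((d : ℝ) - 1) ^ 2 + 2, by positivity, ?_⟩
  intro p hp h1 hsum hdary x hx
  have hp0 : ∀ v, 0 ≤ p v := fun v => (hp v).1
  set L := Real.log x with hL
  have hL0 : 0 ≤ L := Real.log_nonneg hx
  set s := Real.sqrt L with hs
  have hs0 : 0 ≤ s := Real.sqrt_nonneg L
  have hs2 : s ^ 2 = L := Real.sq_sqrt hL0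
  set θ : ℝ := 1 / (1 + s) with hθ
  have hθpos : 0 < θ := by rw [hθ]; positivity
  have hθ1 : θ ≤ 1 := by
    rw [hθ, div_le_one (by positivity)]; linarith
  have hθs : θ * (1 + s) = 1 := by rw [hθ]; field_simp
  have hlog2 : (0 : ℝ) < Real.log 2 := Real.log_pos (by norm_num)
  have hlog2half : (1 : ℝ) / 2 < Real.log 2 := by
    have := Real.log_two_gt_d9; linarith
  set c0 : ℝ := Real.log 2 / ((d : ℝ) - 1) with hc0
  have hc0pos : 0 < c0 := by rw [hc0]; apply div_pos hlog2 (by linarith)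
  set Q : ℝ := Real.exp (-(θ * c0)) with hQ
  set P : ℝ := Real.exp (-(θ * Real.log 2)) with hP
  have hQpos : 0 < Q := Real.exp_pos _
  have hPpos : 0 < P := Real.exp_pos _
  have hQ1 : Q ≤ 1 := by
    rw [hQ]; apply Real.exp_le_one_iff.mpr; nlinarith
  set N := ⌊L / Real.log 2⌋₊ with hN
  set ρ : List ℕ → ℕ → ℕ := fun u j => Rnk d p (u.take j) (u.getD j 0) with hρ
  set Φ : List ℕ → List ℕ := fun u => List.ofFn (fun j : Fin u.length => ρ u j) with hΦ
  set Wf : List ℕ → ℕ :=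
    fun r => ∑ m ∈ Finset.range r.length, ∑ j ∈ Finset.range (m + 1), (r.getD j 1 - 1) with hWf
  set g : List ℕ → ℝ := fun r => Real.exp (θ * L) * P ^ r.length * Q ^ Wf r with hg
  have hgnn : ∀ r, 0 ≤ g r := by
    intro r; rw [hg]; positivity
  set V := {u : List ℕ | (∀ i ∈ u, 1 ≤ i) ∧
      1 ≤ x * ∏ j ∈ Finset.range u.length, p (u.take (j + 1)) / 2} with hV
  -- membership facts
  have hmem : ∀ u ∈ V, ∀ j, j < u.length → u.getD j 0 ∈ Finset.Icc 1 d := by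
    intro u hu j hj
    simp only [hV, Set.mem_setOf_eq] at hu
    obtain ⟨hu1, hu2⟩ := hu
    rw [Finset.mem_Icc]
    constructor
    · have hmm : u.getD j 0 ∈ u := by
        rw [List.getD_eq_getElem u 0 hj]
        exact List.getElem_mem _
      exact hu1 _ hmm
    · by_contra hgt
      push_neg at hgt
      have hz : p (u.take (j + 1)) = 0 := by
        rw [take_succ_eq hj]
        exact hdary _ _ (by omega)
      have hzero : ∏ j ∈ Finset.range u.length, p (u.take (j + 1)) / 2 = 0 := by
        apply Finset.prod_eq_zero (Finset.mem_range.mpr hj)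
        rw [hz]; norm_num
      rw [hzero, mul_zero] at hu2
      linarith
  have hΦlen : ∀ u : List ℕ, (Φ u).length = u.length := by
    intro u; rw [hΦ]; exact List.length_ofFn
  have hΦget : ∀ (u : List ℕ) (j : ℕ), j < u.length → (Φ u).getD j 1 = ρ u j := by
    intro u j hj
    rw [hΦ]
    simp only [List.getD_eq_getElem?_getD, List.getElem?_ofFn, List.ofFnNthVal, hj, dif_pos,
      Option.getD_some]
  have hWeq : ∀ u : List ℕ, Wf (Φ u) =
      ∑ m ∈ Finset.range u.length, ∑ j ∈ Finset.range (m + 1), (ρ u j - 1) := by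
    intro u
    rw [hWf]
    simp only [hΦlen]
    apply Finset.sum_congr rfl
    intro m hm
    apply Finset.sum_congr rfl
    intro j hj
    rw [hΦget u j (by simp at hm hj; omega)]
  have hkey : ∀ u ∈ V, (u.length : ℝ) * Real.log 2 + c0 * (Wf (Φ u) : ℝ) ≤ L := by
    intro u hu
    have hu2 : 1 ≤ x * ∏ j ∈ Finset.range u.length, p (u.take (j + 1)) / 2 := by
      have hh := hu; simp only [hV, Set.mem_setOf_eq] at hh; exact hh.2
    have hpath := path_bound hd hp0 h1 hsum hdary u (hmem u hu)
    have hprod1 : ∏ j ∈ Finset.range u.length, p (u.take (j + 1)) ≤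
        Real.exp (-c0 * (Wf (Φ u) : ℝ)) := by
      calc ∏ j ∈ Finset.range u.length, p (u.take (j + 1))
          ≤ ∏ j ∈ Finset.range u.length, Real.exp (-c0 *
              ((∑ i ∈ Finset.range (j + 1), (Rnk d p (u.take i) (u.getD i 0) - 1) : ℕ) : ℝ)) := by
            apply Finset.prod_le_prod
            · intro j _; exact hp0 _
            · intro j hj
              exact hpath (j + 1) (by simp at hj; omega)
        _ = Real.exp (∑ j ∈ Finset.range u.length, (-c0 *
              ((∑ i ∈ Finset.range (j + 1), (Rnk d p (u.take i) (u.getD i 0) - 1) : ℕ) : ℝ))) :=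
            (Real.exp_sum _ _).symm
        _ = Real.exp (-c0 * (Wf (Φ u) : ℝ)) := by
            congr 1
            rw [← Finset.mul_sum, hWeq u]
            congr 1
            rw [Nat.cast_sum]
    have hsplit : ∏ j ∈ Finset.range u.length, p (u.take (j + 1)) / 2
        = (∏ j ∈ Finset.range u.length, p (u.take (j + 1))) / 2 ^ u.length := by
      rw [Finset.prod_div_distrib, Finset.prod_const, Finset.card_range]
    have h2n : (2 : ℝ) ^ u.length ≤ x * Real.exp (-c0 * (Wf (Φ u) : ℝ)) := by
      rw [hsplit, ← mul_div_assoc, le_div_iff₀ (by positivity), one_mul] at hu2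
      calc (2 : ℝ) ^ u.length ≤ x * ∏ j ∈ Finset.range u.length, p (u.take (j + 1)) := hu2
        _ ≤ x * Real.exp (-c0 * (Wf (Φ u) : ℝ)) :=
            mul_le_mul_of_nonneg_left hprod1 (by linarith)
    have hexpx : Real.exp ((u.length : ℝ) * Real.log 2 + c0 * (Wf (Φ u) : ℝ)) ≤ x := by
      rw [Real.exp_add, Real.exp_nat_mul, Real.exp_log (by norm_num : (0:ℝ) < 2)]
      have hmul := mul_le_mul_of_nonneg_right h2n (Real.exp_pos (c0 * (Wf (Φ u) : ℝ))).le
      calc (2 : ℝ) ^ u.length * Real.exp (c0 * ((Wf (Φ u) : ℕ) : ℝ))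
          ≤ x * Real.exp (-c0 * ((Wf (Φ u) : ℕ) : ℝ)) *
              Real.exp (c0 * ((Wf (Φ u) : ℕ) : ℝ)) := hmul
        _ = x := by
            rw [mul_assoc, ← Real.exp_add]
            have hzz : -c0 * ((Wf (Φ u) : ℕ) : ℝ) + c0 * ((Wf (Φ u) : ℕ) : ℝ) = 0 := by ring
            rw [hzz, Real.exp_zero, mul_one]
    have hxpos : (0 : ℝ) < x := lt_of_lt_of_le one_pos hx
    rw [hL]
    exact (Real.le_log_iff_exp_le hxpos).mpr hexpx
  have hlenN : ∀ u ∈ V, u.length ≤ N := by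
    intro u hu
    have h := hkey u hu
    have hW : (0 : ℝ) ≤ c0 * (Wf (Φ u) : ℝ) := by positivity
    apply Nat.le_floor
    rw [le_div_iff₀ hlog2]
    linarith
  have hg1 : ∀ u ∈ V, 1 ≤ g (Φ u) := by
    intro u hu
    have h := hkey u hu
    rw [hg]
    simp only [hΦlen]
    rw [← Real.exp_nat_mul, ← Real.exp_nat_mul, ← Real.exp_add, ← Real.exp_add]
    apply Real.one_le_exp
    have h1' : 0 ≤ θ * (L - ((u.length : ℝ) * Real.log 2 + c0 * (Wf (Φ u) : ℝ))) := by
      apply mul_nonneg hθpos.le; linarith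
    nlinarith [h1']
  have hinj : ∀ u ∈ V, ∀ u' ∈ V, Φ u = Φ u' → u = u' := by
    intro u hu u' hu' hΦeq
    have hlen : u.length = u'.length := by
      have h1' := hΦlen u
      have h2' := hΦlen u'
      rw [hΦeq] at h1'
      omega
    have hρeq : ∀ j, j < u.length → ρ u j = ρ u' j := by
      intro j hj
      have e1 := hΦget u j hj
      have e2 := hΦget u' j (by omega)
      rw [← e1, ← e2, hΦeq]
    have htakes : ∀ m, m ≤ u.length → u.take m = u'.take m := by
      intro m
      induction m with
      | zero => intro _; simp
      | succ m ih =>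
        intro hm1
        have hm : m < u.length := by omega
        have ht := ih (by omega)
        have ha : u.getD m 0 ∈ Finset.Icc 1 d := hmem u hu m hm
        have ha' : u'.getD m 0 ∈ Finset.Icc 1 d := hmem u' hu' m (by omega)
        have hreq : Rnk d p (u.take m) (u.getD m 0) = Rnk d p (u.take m) (u'.getD m 0) := by
          have hrr := hρeq m hm
          simp only [hρ] at hrr
          rw [← ht] at hrr
          exact hrr
        have haa : u.getD m 0 = u'.getD m 0 := Rnk_injOn ha ha' hreq
        rw [take_succ_eq hm, take_succ_eq (show m < u'.length by omega), ht, haa]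
    have hfin := htakes u.length le_rfl
    rwa [List.take_length, hlen, List.take_length] at hfin
  -- the ambient finset
  set Sn : ℕ → Finset (List ℕ) :=
    fun n => (Fintype.piFinset (fun _ : Fin n => Finset.Icc 1 d)).image List.ofFn with hSn
  set T : Finset (List ℕ) := (Finset.range (N + 1)).biUnion Sn with hT
  have hlenSn : ∀ n r, r ∈ Sn n → r.length = n := by
    intro n r hr
    rw [hSn] at hr
    obtain ⟨f, _, rfl⟩ := Finset.mem_image.mp hr
    exact List.length_ofFn
  have hmemSn : ∀ (n : ℕ) (f : Fin n → ℕ), (∀ j, f j ∈ Finset.Icc 1 d) →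
      List.ofFn f ∈ Sn n := by
    intro n f hf
    rw [hSn]
    exact Finset.mem_image.mpr ⟨f, Fintype.mem_piFinset.mpr hf, rfl⟩
  have hofFn : ∀ l : List ℕ, List.ofFn (fun j : Fin l.length => l.getD (j : ℕ) 0) = l := by
    intro l
    conv_rhs => rw [← List.ofFn_getElem (xs := l)]
    congr 1
    funext j
    exact List.getD_eq_getElem l 0 j.isLt
  have hΦSn : ∀ u ∈ V, Φ u ∈ Sn u.length := by
    intro u hu
    rw [hΦ]
    apply hmemSn
    intro j
    rw [Finset.mem_Icc]
    exact ⟨Rnk_pos (hmem u hu j j.isLt), Rnk_le _ _⟩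
  have hVT : V ⊆ ↑T := by
    intro u hu
    rw [hT]
    simp only [Finset.coe_biUnion, Set.mem_iUnion, Finset.mem_coe]
    refine ⟨u.length, Finset.mem_range.mpr (by have := hlenN u hu; omega), ?_⟩
    have hmm := hmemSn u.length (fun j : Fin u.length => u.getD (j : ℕ) 0)
      (fun j => hmem u hu j j.isLt)
    rwa [hofFn u] at hmm
  have hVfin : V.Finite := Set.Finite.subset T.finite_toSet hVT
  -- counting
  have hcount : (V.ncard : ℝ) ≤ ∑ r ∈ T, g r := by
    rw [Set.ncard_eq_toFinset_card V hVfin]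
    have hSmem : ∀ u, u ∈ hVfin.toFinset ↔ u ∈ V := fun u => Set.Finite.mem_toFinset hVfin
    calc ((hVfin.toFinset.card : ℕ) : ℝ) = ∑ _u ∈ hVfin.toFinset, (1 : ℝ) := by simp
      _ ≤ ∑ u ∈ hVfin.toFinset, g (Φ u) := by
          apply Finset.sum_le_sum
          intro u hu
          exact hg1 u ((hSmem u).mp hu)
      _ = ∑ r ∈ hVfin.toFinset.image Φ, g r := by
          rw [Finset.sum_image]
          intro u hu u' hu' h
          exact hinj u ((hSmem u).mp hu) u' ((hSmem u').mp hu') h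
      _ ≤ ∑ r ∈ T, g r := by
          apply Finset.sum_le_sum_of_subset_of_nonneg
          · intro r hr
            obtain ⟨u, hu, rfl⟩ := Finset.mem_image.mp hr
            have huV := (hSmem u).mp hu
            rw [hT]
            apply Finset.mem_biUnion.mpr
            refine ⟨u.length, Finset.mem_range.mpr (by have := hlenN u huV; omega), hΦSn u huV⟩
          · intro r _ _
            exact hgnn r
  -- level bound
  have hQgeom : θ * c0 * Q ≤ 1 - Q := by
    have h := Real.add_one_le_exp (θ * c0)
    have h2 : Real.exp (θ * c0) * Q = 1 := by
      rw [hQ, ← Real.exp_add]; simp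
    nlinarith [hQpos]
  have h1Q : 0 < 1 - Q := lt_of_lt_of_le (by positivity) hQgeom
  have hPgeom : θ * Real.log 2 * P ≤ 1 - P := by
    have h := Real.add_one_le_exp (θ * Real.log 2)
    have h2 : Real.exp (θ * Real.log 2) * P = 1 := by
      rw [hP, ← Real.exp_add]; simp
    nlinarith [hPpos]
  have h1P : 0 < 1 - P := lt_of_lt_of_le (by positivity) hPgeom
  have hlevel : ∀ n, ∑ r ∈ Sn n, g r ≤
      Real.exp (θ * L) * P ^ n * Real.exp (((d : ℝ) - 1) / (θ * c0)) := by
    intro n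
    have hstep1 : ∑ r ∈ Sn n, g r = ∑ f ∈ Fintype.piFinset (fun _ : Fin n => Finset.Icc 1 d),
        g (List.ofFn f) := by
      simp only [hSn]
      rw [Finset.sum_image]
      intro f _ f' _ h
      exact List.ofFn_injective h
    have hgof : ∀ f : Fin n → ℕ, g (List.ofFn f) = Real.exp (θ * L) * P ^ n *
        ∏ j : Fin n, Q ^ ((n - (j : ℕ)) * (f j - 1)) := by
      intro f
      simp only [hg, List.length_ofFn]
      congr 1
      have hW : Wf (List.ofFn f)
          = ∑ j ∈ Finset.range n, (n - j) * ((List.ofFn f).getD j 1 - 1) := by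
        simp only [hWf, List.length_ofFn]
        exact sumsum _ n
      rw [hW, ← Finset.prod_pow_eq_pow_sum]
      rw [← Fin.prod_univ_eq_prod_range (fun j => Q ^ ((n - j) * ((List.ofFn f).getD j 1 - 1))) n]
      apply Finset.prod_congr rfl
      intro j _
      congr 2
      simp only [List.getD_eq_getElem?_getD, List.getElem?_ofFn, List.ofFnNthVal, j.isLt, dif_pos,
        Option.getD_some]
    have hfac : ∑ f ∈ Fintype.piFinset (fun _ : Fin n => Finset.Icc 1 d),
        ∏ j : Fin n, Q ^ ((n - (j : ℕ)) * (f j - 1))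
        = ∏ j : Fin n, ∑ i ∈ Finset.Icc 1 d, Q ^ ((n - (j : ℕ)) * (i - 1)) :=
      (Finset.prod_univ_sum (fun _ : Fin n => Finset.Icc 1 d)
        (fun j i => Q ^ ((n - (j : ℕ)) * (i - 1)))).symm
    have hfacbound : ∀ j : Fin n, ∑ i ∈ Finset.Icc 1 d, Q ^ ((n - (j : ℕ)) * (i - 1))
        ≤ Real.exp (((d : ℝ) - 1) * Q ^ (n - (j : ℕ))) := by
      intro j
      set w := n - (j : ℕ) with hw
      have hw1 : 1 ≤ w := by rw [hw]; have := j.isLt; omega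
      have h1mem : (1 : ℕ) ∈ Finset.Icc 1 d := Finset.mem_Icc.mpr ⟨le_rfl, by omega⟩
      rw [← Finset.add_sum_erase _ _ h1mem]
      have hterm : ∀ i ∈ (Finset.Icc 1 d).erase 1, Q ^ (w * (i - 1)) ≤ Q ^ w := by
        intro i hi
        have hi2 : 2 ≤ i := by
          have hh1 := Finset.mem_erase.mp hi
          have hh2 := Finset.mem_Icc.mp hh1.2
          omega
        apply pow_le_pow_of_le_one hQpos.le hQ1
        calc w = w * 1 := (mul_one w).symm
          _ ≤ w * (i - 1) := Nat.mul_le_mul_left w (by omega)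
      have hsum2 : ∑ i ∈ (Finset.Icc 1 d).erase 1, Q ^ (w * (i - 1))
          ≤ ((d : ℝ) - 1) * Q ^ w := by
        have hcard : ((Finset.Icc 1 d).erase 1).card = d - 1 := by
          rw [Finset.card_erase_of_mem h1mem, Nat.card_Icc]
          omega
        calc ∑ i ∈ (Finset.Icc 1 d).erase 1, Q ^ (w * (i - 1))
            ≤ ((Finset.Icc 1 d).erase 1).card • Q ^ w := Finset.sum_le_card_nsmul _ _ _ hterm
          _ = ((d - 1 : ℕ) : ℝ) * Q ^ w := by rw [hcard, nsmul_eq_mul]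
          _ = ((d : ℝ) - 1) * Q ^ w := by
              congr 1
              push_cast [Nat.cast_sub (by omega : 1 ≤ d)]
              ring
      have hQ0 : Q ^ (w * (1 - 1)) = 1 := by norm_num
      rw [hQ0]
      have hexp1 := Real.add_one_le_exp (((d : ℝ) - 1) * Q ^ w)
      linarith [hsum2]
    have hgeom2 : ∑ j : Fin n, Q ^ (n - (j : ℕ)) ≤ 1 / (θ * c0) := by
      rw [Fin.sum_univ_eq_sum_range (fun j => Q ^ (n - j)) n]
      have hre : ∀ j ∈ Finset.range n, Q ^ (n - j) = Q ^ (n - 1 - j) * Q := by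
        intro j hj
        have hh : n - j = (n - 1 - j) + 1 := by simp at hj; omega
        rw [hh, pow_succ]
      rw [Finset.sum_congr rfl hre, ← Finset.sum_mul,
        Finset.sum_range_reflect (fun i => Q ^ i) n]
      have hgs : (∑ i ∈ Finset.range n, Q ^ i) * (1 - Q) = 1 - Q ^ n := by
        linear_combination -(geom_sum_mul Q n)
      have hsum3 : (∑ i ∈ Finset.range n, Q ^ i) ≤ 1 / (1 - Q) := by
        rw [le_div_iff₀ h1Q, hgs]
        have := pow_nonneg hQpos.le n
        linarith
      have hfinal : (1 / (1 - Q)) * Q ≤ 1 / (θ * c0) := by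
        rw [div_mul_eq_mul_div, one_mul, div_le_div_iff₀ h1Q (by positivity)]
        nlinarith [hQgeom]
      calc (∑ i ∈ Finset.range n, Q ^ i) * Q ≤ (1 / (1 - Q)) * Q :=
            mul_le_mul_of_nonneg_right hsum3 hQpos.le
        _ ≤ 1 / (θ * c0) := hfinal
    calc ∑ r ∈ Sn n, g r
        = ∑ f ∈ Fintype.piFinset (fun _ : Fin n => Finset.Icc 1 d), g (List.ofFn f) := hstep1
      _ = Real.exp (θ * L) * P ^ n * ∑ f ∈ Fintype.piFinset (fun _ : Fin n => Finset.Icc 1 d),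
            ∏ j : Fin n, Q ^ ((n - (j : ℕ)) * (f j - 1)) := by
          rw [Finset.mul_sum]
          exact Finset.sum_congr rfl (fun f _ => hgof f)
      _ = Real.exp (θ * L) * P ^ n *
            ∏ j : Fin n, ∑ i ∈ Finset.Icc 1 d, Q ^ ((n - (j : ℕ)) * (i - 1)) := by rw [hfac]
      _ ≤ Real.exp (θ * L) * P ^ n * Real.exp (((d : ℝ) - 1) / (θ * c0)) := by
          apply mul_le_mul_of_nonneg_left _ (by positivity)
          calc ∏ j : Fin n, ∑ i ∈ Finset.Icc 1 d, Q ^ ((n - (j : ℕ)) * (i - 1))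
              ≤ ∏ j : Fin n, Real.exp (((d : ℝ) - 1) * Q ^ (n - (j : ℕ))) := by
                apply Finset.prod_le_prod
                · intro j _
                  apply Finset.sum_nonneg
                  intro i _
                  positivity
                · intro j _
                  exact hfacbound j
            _ = Real.exp (∑ j : Fin n, ((d : ℝ) - 1) * Q ^ (n - (j : ℕ))) :=
                (Real.exp_sum _ _).symm
            _ ≤ Real.exp (((d : ℝ) - 1) / (θ * c0)) := by
                apply Real.exp_le_exp.mpr
                rw [← Finset.mul_sum]
                calc ((d : ℝ) - 1) * ∑ j : Fin n, Q ^ (n - (j : ℕ))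
                    ≤ ((d : ℝ) - 1) * (1 / (θ * c0)) :=
                      mul_le_mul_of_nonneg_left hgeom2 (by linarith)
                  _ = ((d : ℝ) - 1) / (θ * c0) := by rw [mul_one_div]
  have hTbound : ∑ r ∈ T, g r ≤
      Real.exp (θ * L) * Real.exp (((d : ℝ) - 1) / (θ * c0)) * (1 / (1 - P)) := by
    have hdisj : (↑(Finset.range (N + 1)) : Set ℕ).PairwiseDisjoint Sn := by
      intro a _ b _ hab
      apply Finset.disjoint_left.mpr
      intro r hra hrb
      exact hab ((hlenSn a r hra).symm.trans (hlenSn b r hrb))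
    rw [hT, Finset.sum_biUnion hdisj]
    calc ∑ n ∈ Finset.range (N + 1), ∑ r ∈ Sn n, g r
        ≤ ∑ n ∈ Finset.range (N + 1),
            Real.exp (θ * L) * P ^ n * Real.exp (((d : ℝ) - 1) / (θ * c0)) := by
          exact Finset.sum_le_sum (fun n _ => hlevel n)
      _ = Real.exp (θ * L) * Real.exp (((d : ℝ) - 1) / (θ * c0)) *
            ∑ n ∈ Finset.range (N + 1), P ^ n := by
          rw [Finset.mul_sum]
          apply Finset.sum_congr rfl
          intro n _
          ring
      _ ≤ _ := by
          apply mul_le_mul_of_nonneg_left _ (by positivity)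
          rw [le_div_iff₀ h1P]
          have hgs : (∑ n ∈ Finset.range (N + 1), P ^ n) * (1 - P) = 1 - P ^ (N + 1) := by
            linear_combination -(geom_sum_mul P (N + 1))
          rw [hgs]
          have := pow_nonneg hPpos.le (N + 1)
          linarith
  -- final numeric bound
  have hθL : θ * L ≤ s := by
    rw [hθ, div_mul_eq_mul_div, div_le_iff₀ (by positivity)]
    nlinarith
  have hE : ((d : ℝ) - 1) / (θ * c0) ≤ 2 * ((d : ℝ) - 1) ^ 2 * (1 + s) := by
    rw [div_le_iff₀ (by positivity)]
    have hcalc : 2 * ((d : ℝ) - 1) ^ 2 * (1 + s) * (θ * c0)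
        = 2 * ((d : ℝ) - 1) * Real.log 2 * (θ * (1 + s)) := by
      rw [hc0]; field_simp
    rw [hcalc, hθs, mul_one]
    nlinarith
  have hPb : 1 / (1 - P) ≤ Real.exp (2 + s) := by
    have hPhalf : (2 : ℝ)⁻¹ ≤ P := by
      rw [hP]
      have : Real.exp (-Real.log 2) = 2⁻¹ := by
        rw [Real.exp_neg, Real.exp_log]; norm_num
      rw [← this]
      apply Real.exp_le_exp.mpr
      nlinarith [hθ1, hlog2]
    have h2 : 1 / (1 - P) ≤ 2 * (1 + s) / Real.log 2 := by
      rw [div_le_div_iff₀ h1P hlog2, one_mul]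
      have hh1 : θ * Real.log 2 * 2⁻¹ ≤ θ * Real.log 2 * P :=
        mul_le_mul_of_nonneg_left hPhalf (by positivity)
      have hh2 : θ * Real.log 2 * 2⁻¹ ≤ 1 - P := le_trans hh1 hPgeom
      have hh3 : 2 * (1 + s) * (θ * Real.log 2 * 2⁻¹) ≤ 2 * (1 + s) * (1 - P) :=
        mul_le_mul_of_nonneg_left hh2 (by positivity)
      have hh4 : Real.log 2 = 2 * (1 + s) * (θ * Real.log 2 * 2⁻¹) := by
        linear_combination (-(Real.log 2)) * hθs
      linarith
    have h3 : 2 * (1 + s) / Real.log 2 ≤ 4 * (1 + s) := by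
      rw [div_le_iff₀ hlog2]
      nlinarith
    have h4 : 4 * (1 + s) ≤ Real.exp (2 + s) := by
      rw [Real.exp_add]
      have e1 : s + 1 ≤ Real.exp s := Real.add_one_le_exp s
      have e2 : (4 : ℝ) ≤ Real.exp 2 := by
        have := Real.exp_one_gt_d9
        have h22 : Real.exp 2 = Real.exp 1 * Real.exp 1 := by
          rw [← Real.exp_add]; norm_num
        nlinarith
      nlinarith [Real.exp_pos s, Real.exp_pos (2:ℝ)]
    linarith
  calc (V.ncard : ℝ) ≤ ∑ r ∈ T, g r := hcount
    _ ≤ Real.exp (θ * L) * Real.exp (((d : ℝ) - 1) / (θ * c0)) * (1 / (1 - P)) := hTbound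
    _ ≤ Real.exp s * Real.exp (2 * ((d : ℝ) - 1) ^ 2 * (1 + s)) * Real.exp (2 + s) := by
        apply mul_le_mul
        · apply mul_le_mul (Real.exp_le_exp.mpr hθL) (Real.exp_le_exp.mpr hE)
            (Real.exp_pos _).le (Real.exp_pos _).le
        · exact hPb
        · positivity
        · positivity
    _ = Real.exp ((2 * ((d : ℝ) - 1) ^ 2 + 2) + (2 * ((d : ℝ) - 1) ^ 2 + 2) * s) := by
        rw [← Real.exp_add, ← Real.exp_add]
        congr 1
        ring
end

section
/- For a word u = (u_1,…,u_h) of positive integers, let r(u) = #{i : u_i ≥ 2}. There is a constant c > 0 such that for all x ≥ 1 and all u in the set E_x(γ) = {u : x ∏_{∅≺v⪯u} γ(v)/2 ≥ 1}, where γ(u) = (4/3)^{−∑(u_i−1)}, one has r(u) ≤ c√(log x). -/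
/-!
With `excess v = ∑ (v_i - 1)` we have `γ(v) = (4/3)^(-excess v)`, so
`∏_{∅ ≺ v ⪯ u} γ(v)/2 ≤ (3/4)^T` for `T = ∑_{∅ ≺ v ⪯ u} excess v = ∑_i (h + 1 - i)(u_i - 1)`.
Of the `r` letters `≥ 2`, the one that is `k`-th from the end has weight `h + 1 - i ≥ k`, so `T ≥ 1 + ⋯ + r = r(r+1)/2`.
On `E_x(γ)` this gives `(4/3)^(r²/2) ≤ x`, i.e. `r ≤ √(2 / log (4/3)) · √(log x)`.
-/

open Finset

def excess (u : List ℕ) : ℕ := (u.map (· - 1)).sum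

def prefixExcessSum (u : List ℕ) : ℕ :=
  ∑ j ∈ range u.length, excess (u.take (j + 1))

lemma excess_cons (a : ℕ) (t : List ℕ) : excess (a :: t) = (a - 1) + excess t := by
  simp [excess]

lemma prefixExcessSum_cons (a : ℕ) (t : List ℕ) :
    prefixExcessSum (a :: t) = (t.length + 1) * (a - 1) + prefixExcessSum t := by
  have hprefix (j : ℕ) : excess ((a :: t).take (j + 1)) = (a - 1) + excess (t.take j) := by
    rw [List.take_succ_cons, excess_cons]
  simp only [prefixExcessSum, List.length_cons, hprefix, sum_range_succ', sum_add_distrib,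
    sum_const, card_range, smul_eq_mul, List.take_zero]
  simp only [excess, List.map_nil, List.sum_nil]
  ring

lemma length_filter_two_le_mul_succ_le (u : List ℕ) :
    (u.filter (2 ≤ ·)).length * ((u.filter (2 ≤ ·)).length + 1) ≤ 2 * prefixExcessSum u := by
  induction u with
  | nil => simp [prefixExcessSum]
  | cons a t ih =>
    have hr : (t.filter (2 ≤ ·)).length ≤ t.length := List.length_filter_le _ _
    rw [prefixExcessSum_cons]
    by_cases ha : 2 ≤ a
    · rw [List.filter_cons_of_pos (by simpa using ha), List.length_cons]
      have : 1 ≤ a - 1 := by omega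
      nlinarith
    · rw [List.filter_cons_of_neg (by simpa using ha)]
      have : a - 1 = 0 := by omega
      simpa [this] using ih

lemma prod_zpow_neg_div_two_le {ι : Type*} (s : Finset ι) (e : ι → ℕ) {q : ℝ} (hq : 0 < q) :
    ∏ j ∈ s, (q ^ (-(e j : ℤ)) / 2) ≤ q⁻¹ ^ ∑ j ∈ s, e j := by
  rw [← prod_pow_eq_pow_sum]
  refine prod_le_prod (fun j _ ↦ by positivity) fun j _ ↦ ?_
  rw [zpow_neg, zpow_natCast, inv_pow]
  linarith [show 0 < (q ^ e j)⁻¹ by positivity]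

lemma mul_log_le_log_of_one_le_mul_inv_pow {q x : ℝ} (hq : 0 < q) {T : ℕ}
    (h : 1 ≤ x * q⁻¹ ^ T) : T * Real.log q ≤ Real.log x := by
  have hqT : q ^ T ≤ x := by
    rwa [inv_pow, ← div_eq_mul_inv, one_le_div (by positivity)] at h
  simpa [Real.log_pow] using Real.log_le_log (by positivity) hqT

/-- For words `u` of positive integers, let `r(u)` be the number of letters
that are `≥ 2`, and let `γ(u) = (4/3)^{-∑ (u_i - 1)}`. There is a constant
`c > 0` such that for all `x ≥ 1`, every word `u` in
`E_x(γ) = {u : x ∏_{∅ ≺ v ⪯ u} γ(v)/2 ≥ 1}` satisfies `r(u) ≤ c √(log x)`. -/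
theorem stmt16 :
    ∃ c : ℝ, 0 < c ∧ ∀ x : ℝ, 1 ≤ x → ∀ u : List ℕ, (∀ i ∈ u, 1 ≤ i) →
      1 ≤ x * ∏ j ∈ Finset.range u.length,
            ((4 / 3 : ℝ) ^ (-((((u.take (j + 1)).map (fun i => i - 1)).sum : ℕ) : ℤ)) / 2) →
      ((u.filter (fun i => 2 ≤ i)).length : ℝ) ≤ c * Real.sqrt (Real.log x) := by
  have hlog : 0 < Real.log (4 / 3) := Real.log_pos (by norm_num)
  refine ⟨√(2 / Real.log (4 / 3)), Real.sqrt_pos.mpr (by positivity), ?_⟩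
  intro x hx u _ hx_mem
  set r := (u.filter (2 ≤ ·)).length
  set T := prefixExcessSum u
  have hprod : 1 ≤ x * (4 / 3 : ℝ)⁻¹ ^ T :=
    hx_mem.trans (mul_le_mul_of_nonneg_left
      (prod_zpow_neg_div_two_le _ (fun j ↦ excess (u.take (j + 1))) (by norm_num)) (by linarith))
  have hT : T * Real.log (4 / 3) ≤ Real.log x :=
    mul_log_le_log_of_one_le_mul_inv_pow (by norm_num) hprod
  have hr : (r : ℝ) * (r + 1) ≤ 2 * T := by exact_mod_cast length_filter_two_le_mul_succ_le u
  have hr_sq : (r : ℝ) ^ 2 ≤ 2 / Real.log (4 / 3) * Real.log x := by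
    rw [div_mul_eq_mul_div, le_div_iff₀ hlog]
    nlinarith
  rw [← Real.sqrt_mul (by positivity)]
  exact Real.le_sqrt_of_sq_le hr_sq
end

section
/- For all a ∈ [1,2] and b ∈ (0,1], if X ~ Beta(a,b), then P(X < 1/17 | X ≤ 1/2) ≤ 1/2. -/
/-
The Beta(a,b) density, with normalising constant `C`, is at most `C (1 - t)⁻¹` on `(0, t)` when
`a ≥ 1` and `b ∈ (0,1]`, and at least `C x` when `a ≤ 2` and `b ≤ 1`. Integrating,
`P(X < 1/17) ≤ C/16` and `P(X ≤ 1/2) ≥ C/8`, and the constant `C` cancels in the ratio.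
-/

open MeasureTheory Set

/-- The Beta(a,b) distribution on ℝ, given by its density on `(0,1)`. -/
noncomputable def betaMeasure (a b : ℝ) : Measure ℝ :=
  volume.withDensity (fun x => ENNReal.ofReal
    (if x ∈ Set.Ioo (0 : ℝ) 1 then
      x ^ (a - 1) * (1 - x) ^ (b - 1) * (Real.Gamma (a + b) / (Real.Gamma a * Real.Gamma b))
    else 0))

noncomputable def betaNormConst (a b : ℝ) : ℝ :=
  Real.Gamma (a + b) / (Real.Gamma a * Real.Gamma b)

noncomputable def betaPdf (a b x : ℝ) : ℝ :=
  if x ∈ Ioo (0 : ℝ) 1 then x ^ (a - 1) * (1 - x) ^ (b - 1) * betaNormConst a b else 0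

lemma betaMeasure_apply (a b : ℝ) {s : Set ℝ} (hs : MeasurableSet s) :
    betaMeasure a b s = ∫⁻ x in s, ENNReal.ofReal (betaPdf a b x) :=
  withDensity_apply _ hs

lemma betaNormConst_pos {a b : ℝ} (ha : 0 < a) (hb : 0 < b) : 0 < betaNormConst a b :=
  div_pos (Real.Gamma_pos_of_pos (add_pos ha hb))
    (mul_pos (Real.Gamma_pos_of_pos ha) (Real.Gamma_pos_of_pos hb))

section BetaBounds

variable {a b t : ℝ}

lemma betaPdf_le (ha : 1 ≤ a) (hb : b ∈ Ioc 0 1) (ht : t < 1) {x : ℝ} (hx : x ∈ Ioo 0 t) :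
    betaPdf a b x ≤ (1 - t)⁻¹ * betaNormConst a b := by
  have hx1 : x ∈ Ioo (0 : ℝ) 1 := ⟨hx.1, hx.2.trans ht⟩
  have hC : 0 < betaNormConst a b := betaNormConst_pos (by linarith) hb.1
  have hxa : x ^ (a - 1) ≤ 1 := Real.rpow_le_one hx.1.le hx1.2.le (by linarith)
  have hxb : (1 - x) ^ (b - 1) ≤ (1 - t)⁻¹ :=
    calc (1 - x) ^ (b - 1) ≤ (1 - t) ^ (b - 1) :=
          Real.rpow_le_rpow_of_nonpos (by linarith) (by linarith [hx.2]) (by linarith [hb.2])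
      _ ≤ (1 - t) ^ (-1 : ℝ) :=
          Real.rpow_le_rpow_of_exponent_ge (by linarith) (by linarith [hx.1, hx.2])
            (by linarith [hb.1])
      _ = (1 - t)⁻¹ := Real.rpow_neg_one _
  rw [betaPdf, if_pos hx1]
  gcongr
  calc x ^ (a - 1) * (1 - x) ^ (b - 1) ≤ 1 * (1 - t)⁻¹ :=
        mul_le_mul hxa hxb (Real.rpow_nonneg (by linarith [hx1.2]) _) zero_le_one
    _ = (1 - t)⁻¹ := one_mul _

lemma betaMeasure_Iio_le (ha : 1 ≤ a) (hb : b ∈ Ioc 0 1) (ht : t < 1) :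
    betaMeasure a b (Iio t) ≤ ENNReal.ofReal (t * ((1 - t)⁻¹ * betaNormConst a b)) := by
  set K := (1 - t)⁻¹ * betaNormConst a b
  have hK : 0 ≤ K := mul_nonneg (inv_nonneg.mpr (by linarith))
    (betaNormConst_pos (by linarith) hb.1).le
  have hpdf : ∀ x ∈ Iio t,
      ENNReal.ofReal (betaPdf a b x) ≤ (Ioo 0 t).indicator (fun _ => ENNReal.ofReal K) x := by
    intro x hxt
    by_cases hx : x ∈ Ioo 0 t
    · rw [indicator_of_mem hx]
      exact ENNReal.ofReal_le_ofReal (betaPdf_le ha hb ht hx)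
    · have hx0 : x ∉ Ioo (0 : ℝ) 1 := fun h => hx ⟨h.1, hxt⟩
      simp [betaPdf, hx0]
  calc betaMeasure a b (Iio t)
      ≤ ∫⁻ x in Iio t, (Ioo 0 t).indicator (fun _ => ENNReal.ofReal K) x := by
        rw [betaMeasure_apply a b measurableSet_Iio]
        exact setLIntegral_mono' measurableSet_Iio hpdf
    _ ≤ ∫⁻ x, (Ioo 0 t).indicator (fun _ => ENNReal.ofReal K) x := setLIntegral_le_lintegral _ _
    _ = ENNReal.ofReal (t * K) := by
        rw [lintegral_indicator_const measurableSet_Ioo, Real.volume_Ioo, sub_zero, mul_comm,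
          ENNReal.ofReal_mul' hK]

lemma mul_le_betaPdf (ha0 : 0 < a) (ha : a ≤ 2) (hb : b ∈ Ioc 0 1) {x : ℝ}
    (hx : x ∈ Ioo (0 : ℝ) 1) : betaNormConst a b * x ≤ betaPdf a b x := by
  have hC := betaNormConst_pos ha0 hb.1
  have hxa : x ≤ x ^ (a - 1) :=
    calc x = x ^ (1 : ℝ) := (Real.rpow_one x).symm
      _ ≤ x ^ (a - 1) := Real.rpow_le_rpow_of_exponent_ge hx.1 hx.2.le (by linarith)
  have hxb : 1 ≤ (1 - x) ^ (b - 1) :=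
    Real.one_le_rpow_of_pos_of_le_one_of_nonpos (by linarith [hx.2]) (by linarith [hx.1])
      (by linarith [hb.2])
  rw [betaPdf, if_pos hx, mul_comm]
  gcongr
  calc x = x * 1 := (mul_one x).symm
    _ ≤ x ^ (a - 1) * (1 - x) ^ (b - 1) :=
        mul_le_mul hxa hxb zero_le_one (Real.rpow_nonneg hx.1.le _)

lemma setIntegral_Ioo_id (ht : 0 ≤ t) : ∫ x in Ioo 0 t, x = t ^ 2 / 2 := by
  rw [← integral_Ioc_eq_integral_Ioo, ← intervalIntegral.integral_of_le ht, integral_id]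
  ring

lemma betaMeasure_Iic_ge (ha0 : 0 < a) (ha : a ≤ 2) (hb : b ∈ Ioc 0 1) (ht0 : 0 ≤ t)
    (ht : t ≤ 1) : ENNReal.ofReal (betaNormConst a b * (t ^ 2 / 2)) ≤ betaMeasure a b (Iic t) := by
  set C := betaNormConst a b
  have hC := betaNormConst_pos ha0 hb.1
  have hint : IntegrableOn (fun x => C * x) (Ioo 0 t) :=
    (continuous_const_mul C).integrableOn_Icc.mono_set Ioo_subset_Icc_self
  calc ENNReal.ofReal (C * (t ^ 2 / 2))
      = ∫⁻ x in Ioo 0 t, ENNReal.ofReal (C * x) := by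
        rw [← ofReal_integral_eq_lintegral_ofReal hint, integral_const_mul, setIntegral_Ioo_id ht0]
        filter_upwards [ae_restrict_mem measurableSet_Ioo] with x hx
        exact mul_nonneg hC.le hx.1.le
    _ ≤ ∫⁻ x in Ioo 0 t, ENNReal.ofReal (betaPdf a b x) :=
        setLIntegral_mono' measurableSet_Ioo fun x hx =>
          ENNReal.ofReal_le_ofReal (mul_le_betaPdf ha0 ha hb ⟨hx.1, hx.2.trans_le ht⟩)
    _ = betaMeasure a b (Ioo 0 t) := (betaMeasure_apply a b measurableSet_Ioo).symm
    _ ≤ betaMeasure a b (Iic t) := measure_mono fun x hx => hx.2.le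

end BetaBounds

/-- For `a ∈ [1,2]`, `b ∈ (0,1]` and `X ~ Beta(a,b)`,
`P(X < 1/17 ∣ X ≤ 1/2) ≤ 1/2`. -/
theorem stmt18 (a b : ℝ) (ha : a ∈ Set.Icc (1 : ℝ) 2) (hb : b ∈ Set.Ioc (0 : ℝ) 1) :
    betaMeasure a b (Set.Iio (1 / 17 : ℝ)) / betaMeasure a b (Set.Iic (1 / 2 : ℝ))
      ≤ 1 / 2 := by
  have hC := betaNormConst_pos (by linarith [ha.1]) hb.1
  have hnum := betaMeasure_Iio_le ha.1 hb (by norm_num : (1 / 17 : ℝ) < 1)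
  have hden := betaMeasure_Iic_ge (by linarith [ha.1]) ha.2 hb
    (by norm_num : (0 : ℝ) ≤ 1 / 2) (by norm_num)
  calc _ ≤ _ := ENNReal.div_le_div hnum hden
    _ = ENNReal.ofReal (1 / 2) := by
        rw [← ENNReal.ofReal_div_of_pos (by positivity)]
        congr 1
        field_simp
        norm_num
    _ = 1 / 2 := by rw [ENNReal.ofReal_div_of_pos two_pos]; simp
end
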